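/- arXiv:1005.0407 — 13 statements merged into one kernel-verified Lean document; each statement's English description precedes it below -/
import Mathlib

section
/- Let Γ be a locally compact group acting continuously on a locally compact Hausdorff space Y such that the action is proper (the map Γ × Y → Y × Y, (γ,y) ↦ (γ·y, y), is a proper map, i.e. preimages of compact sets are compact) and cocompact (there is a compact set K ⊆ Y with Γ·K = Y). Suppose Y carries a uniform structure 𝒰 inducing its topology which is Γ-invariant, meaning every entourage contains a Γ-invariant entourage. Then a subset U ⊆ Y×Y is an entourage of 𝒰 if and only if U contains a Γ-invariant neighborhood of the diagonal. In particular there is at most one Γ-invariant uniform structure inducing the topology of Y. -/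
/-!
Every entourage contains an invariant one, and entourages are neighbourhoods of the diagonal.
Conversely, let `V` be an invariant neighbourhood of the diagonal and let the translates of a
compact `K` cover `Y`. Compactness of `K` gives an entourage `E`, which may be taken invariant,
with `(k, z) ∈ V` whenever `k ∈ K` and `(k, z) ∈ E`; translating an arbitrary pair of `E` to one
whose first point lies in `K` then shows `E ⊆ V`.
-/

open UniformSpace Set Filter Topology Uniformity

theorem IsCompact.eventually_uniformity_of_mem_nhdsSet_diagonal {α : Type*} [UniformSpace α]
    {K : Set α} (hK : IsCompact K) {V : Set (α × α)} (hV : V ∈ 𝓝ˢ (diagonal α)) :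
    ∀ᶠ p in 𝓤 α, p.1 ∈ K → p ∈ V := by
  have hbasis : (𝓤 (α × α)).HasBasis (fun U => U ∈ 𝓤 α) fun U =>
      (fun p : (α × α) × α × α => ((p.1.1, p.2.1), p.1.2, p.2.2)) ⁻¹' U ×ˢ U := by
    rw [uniformity_prod_eq_comap_prod]
    exact (𝓤 α).basis_sets.prod_self.comap _
  have hVK : V ∈ 𝓝ˢ (Function.diag '' K) :=
    nhdsSet_mono (diag_image K ▸ inter_subset_left) hV
  obtain ⟨U, hU, hUV⟩ :=
    ((hK.image continuous_diag).nhdsSet_basis_uniformity hbasis).mem_iff.1 hVK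
  filter_upwards [hU] with p hp hpK
  exact hUV <| mem_iUnion₂.2 ⟨(p.1, p.1), mem_image_of_mem _ hpK, refl_mem_uniformity hU, hp⟩

theorem subset_of_fst_mem_imp_mem_of_smul_covering {Γ Y : Type*} [Group Γ] [MulAction Γ Y]
    {K : Set Y} (hK : ∀ y : Y, ∃ γ : Γ, ∃ k ∈ K, y = γ • k) {E V : Set (Y × Y)}
    (hE : ∀ (γ : Γ) (y y' : Y), (γ • y, γ • y') ∈ E → (y, y') ∈ E)
    (hV : ∀ (γ : Γ) (y y' : Y), (y, y') ∈ V → (γ • y, γ • y') ∈ V)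
    (hEV : ∀ p ∈ E, p.1 ∈ K → p ∈ V) : E ⊆ V := by
  rintro ⟨y, y'⟩ hy
  obtain ⟨γ, k, hk, rfl⟩ := hK y
  have hkE : (k, γ⁻¹ • y') ∈ E := hE γ _ _ (by rwa [smul_inv_smul])
  simpa using hV γ _ _ (hEV _ hkE hk)

theorem stmt_1_general {Γ Y : Type*} [Group Γ] [UniformSpace Y] [MulAction Γ Y]
    (hcocompact : ∃ K : Set Y, IsCompact K ∧ ∀ y : Y, ∃ γ : Γ, ∃ k ∈ K, y = γ • k)
    (hinv : ∀ U ∈ uniformity Y, ∃ V ∈ uniformity Y, V ⊆ U ∧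
      ∀ (γ : Γ) (y y' : Y), (γ • y, γ • y') ∈ V ↔ (y, y') ∈ V)
    (U : Set (Y × Y)) :
    U ∈ uniformity Y ↔ ∃ V : Set (Y × Y),
      (∀ (γ : Γ) (y y' : Y), (γ • y, γ • y') ∈ V ↔ (y, y') ∈ V) ∧
      V ∈ nhdsSet (Set.diagonal Y) ∧ V ⊆ U := by
  constructor
  · intro hU
    obtain ⟨V, hV, hVU, hVinv⟩ := hinv U hU
    exact ⟨V, hVinv, nhdsSet_diagonal_le_uniformity hV, hVU⟩
  · rintro ⟨V, hVinv, hVdiag, hVU⟩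
    obtain ⟨K, hK, hKY⟩ := hcocompact
    obtain ⟨E, hE, hEK, hEinv⟩ :=
      hinv _ (hK.eventually_uniformity_of_mem_nhdsSet_diagonal hVdiag)
    have hEV : E ⊆ V := subset_of_fst_mem_imp_mem_of_smul_covering hKY
      (fun γ y y' => (hEinv γ y y').1) (fun γ y y' => (hVinv γ y y').2) hEK
    exact mem_of_superset hE (hEV.trans hVU)

/-- Let `Γ` be a locally compact group acting continuously, properly and
cocompactly on a locally compact Hausdorff space `Y`. Suppose the topology of `Y` comes from a
uniform structure which is `Γ`-invariant (every entourage contains a `Γ`-invariant entourage).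
Then a set `U ⊆ Y × Y` is an entourage if and only if it contains a `Γ`-invariant neighborhood
of the diagonal. -/
theorem stmt_1 {Γ Y : Type*} [Group Γ] [TopologicalSpace Γ] [IsTopologicalGroup Γ]
    [LocallyCompactSpace Γ] [UniformSpace Y] [T2Space Y] [LocallyCompactSpace Y]
    [MulAction Γ Y] [ContinuousSMul Γ Y]
    (hproper : IsProperMap (fun p : Γ × Y => (p.1 • p.2, p.2)))
    (hcocompact : ∃ K : Set Y, IsCompact K ∧ ∀ y : Y, ∃ γ : Γ, ∃ k ∈ K, y = γ • k)
    (hinv : ∀ U ∈ uniformity Y, ∃ V ∈ uniformity Y, V ⊆ U ∧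
      ∀ (γ : Γ) (y y' : Y), (γ • y, γ • y') ∈ V ↔ (y, y') ∈ V)
    (U : Set (Y × Y)) :
    U ∈ uniformity Y ↔ ∃ V : Set (Y × Y),
      (∀ (γ : Γ) (y y' : Y), (γ • y, γ • y') ∈ V ↔ (y, y') ∈ V) ∧
      V ∈ nhdsSet (Set.diagonal Y) ∧ V ⊆ U :=
  stmt_1_general hcocompact hinv U
end

section
/- Let Γ be a locally compact group acting continuously on a locally compact Hausdorff space Y such that the action is proper (the map Γ × Y → Y × Y, (γ,y) ↦ (γ·y, y), is proper) and cocompact (there is a compact K ⊆ Y with Γ·K = Y), and suppose Y carries a uniform structure inducing its topology in which every entourage contains a Γ-invariant entourage. Let Z be any uniform space equipped with an action of Γ whose uniform structure is Γ-invariant (every entourage of Z contains a Γ-invariant entourage). Then every continuous Γ-equivariant map f : Y → Z is uniformly continuous. -/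
/-!
By Heine–Cantor, a continuous map is uniformly continuous along a compact set `K`: for each
entourage `V` of `Z` there is an entourage `U` of `Y` with `(f k, f y) ∈ V` whenever `k ∈ K` and
`(k, y) ∈ U`. Choosing `U` and `V` invariant, equivariance transports this from `K` to each of
its translates, and these cover `Y`.
-/

open Set Uniformity

def IsInvariantEntourage (Γ : Type*) {X : Type*} [SMul Γ X] (V : Set (X × X)) : Prop :=
  ∀ (γ : Γ) (x x' : X), (γ • x, γ • x') ∈ V ↔ (x, x') ∈ V

section InvariantEntourage

variable {Γ Y Z : Type*} [Group Γ] [MulAction Γ Y] [MulAction Γ Z]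

theorem IsInvariantEntourage.mapsTo_prodMap_of_smul_cover {K : Set Y}
    (hcover : ∀ y : Y, ∃ γ : Γ, ∃ k ∈ K, y = γ • k)
    {U : Set (Y × Y)} {V : Set (Z × Z)} (hU : IsInvariantEntourage Γ U)
    (hV : IsInvariantEntourage Γ V) {f : Y → Z} (hequiv : ∀ (γ : Γ) (y : Y), f (γ • y) = γ • f y)
    (hK : ∀ k ∈ K, ∀ y, (k, y) ∈ U → (f k, f y) ∈ V) :
    MapsTo (Prod.map f f) U V := by
  rintro ⟨y, y'⟩ hyy'
  obtain ⟨γ, k, hk, rfl⟩ := hcover y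
  have hk' : (k, γ⁻¹ • y') ∈ U := (hU γ _ _).mp (by rwa [smul_inv_smul])
  have := (hV γ _ _).mpr (hK k hk _ hk')
  rwa [← hequiv, ← hequiv, smul_inv_smul] at this

theorem uniformContinuous_of_smul_cover_of_isCompact [UniformSpace Y] [UniformSpace Z]
    {K : Set Y} (hK : IsCompact K) (hcover : ∀ y : Y, ∃ γ : Γ, ∃ k ∈ K, y = γ • k)
    (hinvY : ∀ U ∈ 𝓤 Y, ∃ V ∈ 𝓤 Y, V ⊆ U ∧ IsInvariantEntourage Γ V)
    (hinvZ : ∀ U ∈ 𝓤 Z, ∃ V ∈ 𝓤 Z, V ⊆ U ∧ IsInvariantEntourage Γ V)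
    {f : Y → Z} (hf : ∀ k ∈ K, ContinuousAt f k)
    (hequiv : ∀ (γ : Γ) (y : Y), f (γ • y) = γ • f y) :
    UniformContinuous f := by
  rw [uniformContinuous_def]
  intro W hW
  obtain ⟨V, hV, hVW, hVinv⟩ := hinvZ W hW
  obtain ⟨U, hU, hUK, hUinv⟩ := hinvY _ (hK.uniformContinuousAt_of_continuousAt f hf hV)
  exact Filter.mem_of_superset hU fun p hp => hVW <|
    hUinv.mapsTo_prodMap_of_smul_cover hcover hVinv hequiv
      (fun k hk y hky => hUK hky hk) hp

end InvariantEntourage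

theorem stmt_2_general {Γ Y Z : Type*} [Group Γ] [UniformSpace Y]
    [MulAction Γ Y] [UniformSpace Z] [MulAction Γ Z]
    (hcocompact : ∃ K : Set Y, IsCompact K ∧ ∀ y : Y, ∃ γ : Γ, ∃ k ∈ K, y = γ • k)
    (hinvY : ∀ U ∈ uniformity Y, ∃ V ∈ uniformity Y, V ⊆ U ∧
      ∀ (γ : Γ) (y y' : Y), (γ • y, γ • y') ∈ V ↔ (y, y') ∈ V)
    (hinvZ : ∀ U ∈ uniformity Z, ∃ V ∈ uniformity Z, V ⊆ U ∧
      ∀ (γ : Γ) (z z' : Z), (γ • z, γ • z') ∈ V ↔ (z, z') ∈ V)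
    (f : Y → Z) (hf : Continuous f)
    (hequiv : ∀ (γ : Γ) (y : Y), f (γ • y) = γ • f y) :
    UniformContinuous f := by
  obtain ⟨K, hK, hcover⟩ := hcocompact
  exact uniformContinuous_of_smul_cover_of_isCompact hK hcover hinvY hinvZ
    (fun k _ => hf.continuousAt) hequiv

/-- Let `Γ` be a locally compact group acting continuously, properly and
cocompactly on a locally compact Hausdorff space `Y` whose topology comes from a `Γ`-invariant
uniform structure. Let `Z` be any uniform `Γ`-space with `Γ`-invariant uniform structure.
Then every continuous `Γ`-equivariant map `f : Y → Z` is uniformly continuous. -/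
theorem stmt_2 {Γ Y Z : Type*} [Group Γ] [TopologicalSpace Γ] [IsTopologicalGroup Γ]
    [LocallyCompactSpace Γ] [UniformSpace Y] [T2Space Y] [LocallyCompactSpace Y]
    [MulAction Γ Y] [ContinuousSMul Γ Y] [UniformSpace Z] [MulAction Γ Z]
    (hproper : IsProperMap (fun p : Γ × Y => (p.1 • p.2, p.2)))
    (hcocompact : ∃ K : Set Y, IsCompact K ∧ ∀ y : Y, ∃ γ : Γ, ∃ k ∈ K, y = γ • k)
    (hinvY : ∀ U ∈ uniformity Y, ∃ V ∈ uniformity Y, V ⊆ U ∧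
      ∀ (γ : Γ) (y y' : Y), (γ • y, γ • y') ∈ V ↔ (y, y') ∈ V)
    (hinvZ : ∀ U ∈ uniformity Z, ∃ V ∈ uniformity Z, V ⊆ U ∧
      ∀ (γ : Γ) (z z' : Z), (γ • z, γ • z') ∈ V ↔ (z, z') ∈ V)
    (f : Y → Z) (hf : Continuous f)
    (hequiv : ∀ (γ : Γ) (y : Y), f (γ • y) = γ • f y) :
    UniformContinuous f :=
  stmt_2_general hcocompact hinvY hinvZ f hf hequiv
end

section
/- Let R > 0 and N ∈ ℕ. Let X be a metric space such that every closed ball of radius R in X contains at most N points. Then there is a decomposition X = X₁ ∪ ⋯ ∪ X_N into N subsets each of which is strictly R-separated. -/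
/-!
Join two points of `X` when they are distinct and at distance at most `R`; the independent sets
of this graph are the strictly `R`-separated sets. The neighbours of `x` lie in the closed ball of
radius `R` about `x` minus `x` itself, so every vertex has fewer than `N` neighbours. Greedy
colouring then `N`-colours every finite subgraph, and by the De Bruijn–Erdős compactness theorem
the whole graph is `N`-colourable; its colour classes are the sets `Xᵢ`.
-/

open Set

namespace SimpleGraph

variable {V : Type*} {G : SimpleGraph V} {n : ℕ}

lemma exists_color_forall_adj_ne {S : Set V} (C : (G.induce S).Coloring (Fin n)) {a : V}
    (ha : (G.neighborSet a).encard < n) : ∃ c, ∀ w : S, G.Adj a w → C w ≠ c := by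
  by_contra! hall
  have hsurj : C '' {w | G.Adj a w} = univ :=
    eq_univ_of_forall hall
  have : (n : ℕ∞) ≤ (G.neighborSet a).encard :=
    calc (n : ℕ∞) = (C '' {w | G.Adj a w}).encard := by simp [hsurj]
      _ ≤ {w : S | G.Adj a w}.encard := encard_image_le _ _
      _ = ((↑) '' {w : S | G.Adj a w} : Set V).encard := (Subtype.val_injective.encard_image _).symm
      _ ≤ (G.neighborSet a).encard := encard_le_encard (by rintro _ ⟨w, hw, rfl⟩; exact hw)
  exact this.not_gt ha

lemma Colorable.induce_insert {S : Set V} (hS : (G.induce S).Colorable n) {a : V}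
    (ha : (G.neighborSet a).encard < n) : (G.induce (insert a S)).Colorable n := by
  classical
  obtain ⟨C⟩ := hS
  obtain ⟨c, hc⟩ := exists_color_forall_adj_ne C ha
  let f : V → Fin n := fun v ↦ if hv : v ∈ S then C ⟨v, hv⟩ else c
  refine ⟨Coloring.mk (fun v ↦ f v) ?_⟩
  rintro ⟨v, hv⟩ ⟨w, hw⟩ (hvw : G.Adj v w)
  show f v ≠ f w
  by_cases hvS : v ∈ S <;> by_cases hwS : w ∈ S
  · simpa [f, hvS, hwS] using C.valid (show (G.induce S).Adj ⟨v, hvS⟩ ⟨w, hwS⟩ from hvw)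
  · obtain rfl : w = a := (mem_insert_iff.1 hw).resolve_right hwS
    simpa [f, hvS, hwS] using hc ⟨v, hvS⟩ hvw.symm
  · obtain rfl : v = a := (mem_insert_iff.1 hv).resolve_right hvS
    simpa [f, hvS, hwS, eq_comm] using hc ⟨w, hwS⟩ hvw
  · obtain rfl : v = a := (mem_insert_iff.1 hv).resolve_right hvS
    obtain rfl : w = v := (mem_insert_iff.1 hw).resolve_right hwS
    exact absurd hvw G.irrefl

-- `encard` rather than `ncard`, which would count an infinite neighbour set as `0`.
theorem colorable_of_forall_encard_neighborSet_lt (h : ∀ v, (G.neighborSet v).encard < n) :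
    G.Colorable n := by
  have hfin (S : Set V) (hS : S.Finite) : (G.induce S).Colorable n := by
    induction S, hS using Set.Finite.induction_on with
    | empty => exact .of_isEmpty n
    | insert _ _ ih => exact ih.induce_insert (h _)
  obtain ⟨C⟩ := nonempty_hom_of_forall_finite_subgraph_hom fun G' hG' ↦
    (hfin G'.verts hG').some.comp ⟨id, G'.adj_sub⟩
  exact ⟨C⟩

end SimpleGraph

namespace Metric

def proximityGraph (X : Type*) [PseudoMetricSpace X] (R : ℝ) : SimpleGraph X where
  Adj x y := x ≠ y ∧ dist x y ≤ R
  symm := ⟨fun x y h ↦ ⟨h.1.symm, dist_comm x y ▸ h.2⟩⟩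
  loopless := ⟨fun _ h ↦ h.1 rfl⟩

variable {X : Type*} [PseudoMetricSpace X] {R : ℝ}

@[simp]
lemma proximityGraph_adj {x y : X} : (proximityGraph X R).Adj x y ↔ x ≠ y ∧ dist x y ≤ R :=
  Iff.rfl

lemma neighborSet_proximityGraph (x : X) :
    (proximityGraph X R).neighborSet x = closedBall x R \ {x} := by
  ext y
  simp [mem_closedBall, dist_comm, eq_comm, and_comm]

lemma encard_neighborSet_proximityGraph_lt (hR : 0 ≤ R) {x : X} {N : ℕ}
    (hfin : (closedBall x R).Finite) (hcard : (closedBall x R).ncard ≤ N) :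
    ((proximityGraph X R).neighborSet x).encard < N := by
  rw [neighborSet_proximityGraph, ← ENat.add_one_le_iff (hfin.sdiff.encard_lt_top.ne),
    encard_sdiff_singleton_add_one (mem_closedBall_self hR), hfin.cast_ncard_eq.symm]
  exact_mod_cast hcard

end Metric

/-- Let `R > 0` and `N ∈ ℕ`. Let `X` be a metric space in which every closed
ball of radius `R` contains at most `N` points. Then `X` decomposes as a union
`X = X₁ ∪ ⋯ ∪ X_N` of `N` strictly `R`-separated subsets. -/
theorem stmt_6 {X : Type*} [MetricSpace X] (R : ℝ) (hR : 0 < R) (N : ℕ)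
    (hball : ∀ x : X,
      (Metric.closedBall x R).Finite ∧ (Metric.closedBall x R).ncard ≤ N) :
    ∃ Xs : Fin N → Set X, (⋃ i, Xs i) = Set.univ ∧
      ∀ i, ∀ x ∈ Xs i, ∀ y ∈ Xs i, x ≠ y → R < dist x y := by
  obtain ⟨C⟩ := SimpleGraph.colorable_of_forall_encard_neighborSet_lt fun x ↦
    Metric.encard_neighborSet_proximityGraph_lt hR.le (hball x).1 (hball x).2
  refine ⟨C.colorClass, iUnion_eq_univ_iff.2 fun x ↦ ⟨C x, C.mem_colorClass x⟩, ?_⟩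
  intro i x hx y hy hxy
  by_contra! hle
  exact C.not_adj_of_mem_colorClass hx hy (Metric.proximityGraph_adj.2 ⟨hxy, hle⟩)
end

section
/- Let F be a closed subset of a locally compact metric space M. Then every bounded, uniformly continuous function f : F → ℝ is the restriction to F of a bounded, uniformly continuous function g : M → ℝ. (Equivalently, the restriction map UC_b(M) → UC_b(F) is surjective.) -/
/-!
A bounded uniformly continuous `f` on `F` is uniformly within `ε` of a Lipschitz function on `F`
(its inf-convolution with `K * dist`, `K ≈ 2 sup |f| / δ(ε)`), which extends to `M` by McShane's
theorem. With such extensions `u k` at errors `2⁻ᵏ`, the series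
`u 0 + ∑ₖ clip_{2·2⁻ᵏ} (u (k + 1) - u k)` converges uniformly on `M` and telescopes to `f` on
`F`; a final clip to `[-C, C]` makes the extension bounded.
-/

open Filter Set Topology
open scoped NNReal

def clip (C t : ℝ) : ℝ := max (-C) (min C t)

lemma clip_of_abs_le {C t : ℝ} (h : |t| ≤ C) : clip C t = t := by
  rw [abs_le] at h
  rw [clip, min_eq_right h.2, max_eq_right h.1]

lemma abs_clip_le (C t : ℝ) : |clip C t| ≤ |C| := by
  unfold clip
  rw [abs_le]
  constructor
  · exact (neg_le_neg (le_abs_self C)).trans (le_max_left _ _)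
  · exact max_le (neg_le_abs C) ((min_le_left _ _).trans (le_abs_self C))

lemma lipschitzWith_clip (C : ℝ) : LipschitzWith 1 (clip C) :=
  (LipschitzWith.id.const_min C).const_max (-C)

lemma uniformContinuous_finset_sum {ι α β : Type*} [UniformSpace α] [UniformSpace β]
    [AddCommGroup β] [IsUniformAddGroup β] (t : Finset ι) {f : ι → α → β}
    (hf : ∀ i ∈ t, UniformContinuous (f i)) :
    UniformContinuous fun x => ∑ i ∈ t, f i x := by
  induction t using Finset.cons_induction with
  | empty => simpa using uniformContinuous_const
  | cons i t hi ih =>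
    simp only [Finset.sum_cons]
    exact (hf i (Finset.mem_cons_self i t)).add
      (ih fun j hj => hf j (Finset.mem_cons_of_mem hj))

section InfConv

variable {X : Type*} [PseudoMetricSpace X] {f : X → ℝ}

/-- The Pasch–Hausdorff envelope of `f`. -/
noncomputable def infConv (f : X → ℝ) (K : ℝ≥0) (x : X) : ℝ := ⨅ y, f y + K * dist x y

lemma bddBelow_range_add_mul_dist (hf : BddBelow (range f)) (K : ℝ≥0) (x : X) :
    BddBelow (range fun y => f y + K * dist x y) := by
  obtain ⟨m, hm⟩ := hf
  refine ⟨m, ?_⟩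
  rintro _ ⟨y, rfl⟩
  have := hm ⟨y, rfl⟩
  dsimp only
  nlinarith [K.2, dist_nonneg (x := x) (y := y)]

lemma infConv_le (hf : BddBelow (range f)) (K : ℝ≥0) (x : X) : infConv f K x ≤ f x := by
  simpa [infConv] using ciInf_le (bddBelow_range_add_mul_dist hf K x) x

lemma le_infConv [Nonempty X] {K : ℝ≥0} {x : X} {a : ℝ}
    (h : ∀ y, a ≤ f y + K * dist x y) : a ≤ infConv f K x :=
  le_ciInf h

lemma lipschitzWith_infConv [Nonempty X] (hf : BddBelow (range f)) (K : ℝ≥0) :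
    LipschitzWith K (infConv f K) := by
  refine LipschitzWith.of_le_add_mul K fun x x' => ?_
  rw [← sub_le_iff_le_add]
  refine le_infConv fun y => ?_
  calc infConv f K x - K * dist x x'
      ≤ f y + K * dist x y - K * dist x x' := by
        gcongr; exact ciInf_le (bddBelow_range_add_mul_dist hf K x) y
    _ ≤ f y + K * dist x' y := by
        nlinarith [K.2, dist_triangle x x' y]

end InfConv

theorem UniformContinuous.exists_lipschitzWith_approx {X : Type*} [PseudoMetricSpace X]
    {f : X → ℝ} (hf : UniformContinuous f) {C : ℝ} (hC : ∀ x, |f x| ≤ C) {ε : ℝ} (hε : 0 < ε) :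
    ∃ K : ℝ≥0, ∃ φ : X → ℝ, LipschitzWith K φ ∧ ∀ x, |φ x - f x| ≤ ε := by
  rcases isEmpty_or_nonempty X with _ | _
  · exact ⟨0, 0, LipschitzWith.const 0, fun x => isEmptyElim x⟩
  obtain ⟨δ, hδ, hfδ⟩ := Metric.uniformContinuous_iff.mp hf ε hε
  set K := (2 * C / δ).toNNReal
  have hKδ : 2 * C ≤ K * δ := (div_le_iff₀ hδ).mp (Real.le_coe_toNNReal _)
  have hbdd : BddBelow (range f) := ⟨-C, by rintro _ ⟨y, rfl⟩; exact neg_le_of_abs_le (hC y)⟩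
  refine ⟨K, infConv f K, lipschitzWith_infConv hbdd K, fun x => abs_le.mpr ⟨?_, ?_⟩⟩
  · suffices f x - ε ≤ infConv f K x by linarith
    refine le_infConv fun y => ?_
    have hKd : 0 ≤ (K : ℝ) * dist x y := by positivity
    rcases lt_or_ge (dist x y) δ with hxy | hxy
    · have := (abs_lt.mp (Real.dist_eq _ _ ▸ hfδ hxy)).2
      linarith
    · have hfx := (abs_le.mp (hC x)).2
      have hfy := (abs_le.mp (hC y)).1
      nlinarith [K.2]
  · linarith [infConv_le hbdd K x]

theorem LipschitzWith.exists_extend_subtype {X : Type*} [PseudoMetricSpace X] {s : Set X}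
    {K : ℝ≥0} {φ : s → ℝ} (hφ : LipschitzWith K φ) :
    ∃ ψ : X → ℝ, LipschitzWith K ψ ∧ ∀ x : s, ψ x = φ x := by
  set φ' : X → ℝ := Function.extend Subtype.val φ 0
  have hrestrict : s.domRestrict φ' = φ := funext fun x => Subtype.val_injective.extend_apply _ _ x
  obtain ⟨ψ, hψ, hψφ⟩ := (lipschitzOnWith_iff_restrict.mpr (hrestrict ▸ hφ)).extend_real
  exact ⟨ψ, hψ, fun x => (hψφ x.2).symm.trans (congrFun hrestrict x)⟩

theorem exists_uniformContinuous_extension_of_forall_approx {α : Type*} [UniformSpace α]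
    {s : Set α} {f : s → ℝ}
    (h : ∀ ε > 0, ∃ u : α → ℝ, UniformContinuous u ∧ ∀ x : s, |u x - f x| ≤ ε) :
    ∃ g : α → ℝ, UniformContinuous g ∧ ∀ x : s, g x = f x := by
  choose u hu happrox using fun k : ℕ => h ((1 / 2) ^ k) (by positivity)
  set b : ℕ → ℝ := fun k => 2 * (1 / 2) ^ k
  set d : ℕ → α → ℝ := fun k x => clip (b k) (u (k + 1) x - u k x)
  have hd_le : ∀ k x, ‖d k x‖ ≤ b k := fun k x =>
    (abs_clip_le _ _).trans_eq (abs_of_pos (by positivity))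
  have hd_uc : ∀ k, UniformContinuous (d k) := fun k =>
    (lipschitzWith_clip _).uniformContinuous.comp ((hu (k + 1)).sub (hu k))
  have hd_s : ∀ k (x : s), d k x = u (k + 1) x - u k x := fun k x => clip_of_abs_le <|
    calc |u (k + 1) x - u k x| ≤ |u (k + 1) x - f x| + |f x - u k x| := abs_sub_le _ _ _
      _ ≤ (1 / 2) ^ (k + 1) + (1 / 2) ^ k :=
        add_le_add (happrox _ x) (abs_sub_comm (u k x) (f x) ▸ happrox _ x)
      _ ≤ b k := by simp only [b, pow_succ]; linarith [pow_pos (one_half_pos (α := ℝ)) k]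
  have hsum := tendstoUniformly_tsum_nat (summable_geometric_two.mul_left 2) hd_le
  refine ⟨fun x => u 0 x + ∑' k, d k x, (hu 0).add (hsum.uniformContinuous
    (Frequently.of_forall fun N => uniformContinuous_finset_sum _ fun k _ => hd_uc k)), fun x => ?_⟩
  have hlim : Tendsto (fun N => u N x) atTop (𝓝 (f x)) := by
    rw [tendsto_iff_norm_sub_tendsto_zero]
    exact squeeze_zero (fun _ => norm_nonneg _) (fun N => happrox N x)
      (tendsto_pow_atTop_nhds_zero_of_lt_one (by norm_num) (by norm_num))
  have htele : Tendsto (fun N => ∑ k ∈ Finset.range N, d k x) atTop (𝓝 (f x - u 0 x)) := by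
    simp_rw [hd_s, Finset.sum_range_sub (fun k => u k x)]
    exact hlim.sub_const _
  simp only [tendsto_nhds_unique (hsum.tendsto_at x) htele, add_sub_cancel]

theorem stmt_7_general {M : Type*} [MetricSpace M]
    (F : Set M) (f : F → ℝ)
    (hfU : UniformContinuous f) (hfB : ∃ C : ℝ, ∀ x : F, |f x| ≤ C) :
    ∃ g : M → ℝ, UniformContinuous g ∧ (∃ C : ℝ, ∀ x : M, |g x| ≤ C) ∧
      ∀ x : F, g x = f x := by
  obtain ⟨C, hC⟩ := hfB
  obtain ⟨g, hg, hgf⟩ : ∃ g : M → ℝ, UniformContinuous g ∧ ∀ x : F, g x = f x := by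
    refine exists_uniformContinuous_extension_of_forall_approx fun ε hε => ?_
    obtain ⟨K, φ, hφ, hφf⟩ := hfU.exists_lipschitzWith_approx hC hε
    obtain ⟨ψ, hψ, hψφ⟩ := hφ.exists_extend_subtype
    exact ⟨ψ, hψ.uniformContinuous, fun x => hψφ x ▸ hφf x⟩
  refine ⟨fun x => clip C (g x), (lipschitzWith_clip C).uniformContinuous.comp hg,
    ⟨|C|, fun x => abs_clip_le C (g x)⟩, fun x => ?_⟩
  simp only [hgf x, clip_of_abs_le (hC x)]

/-- Let `F` be a closed subset of a locally compact metric space `M`.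
Then every bounded, uniformly continuous function `f : F → ℝ` extends to a bounded,
uniformly continuous function `g : M → ℝ`. -/
theorem stmt_7 {M : Type*} [MetricSpace M] [LocallyCompactSpace M]
    (F : Set M) (hF : IsClosed F) (f : F → ℝ)
    (hfU : UniformContinuous f) (hfB : ∃ C : ℝ, ∀ x : F, |f x| ≤ C) :
    ∃ g : M → ℝ, UniformContinuous g ∧ (∃ C : ℝ, ∀ x : M, |g x| ≤ C) ∧
      ∀ x : F, g x = f x :=
  stmt_7_general F f hfU hfB
end

section
/- Let M be a metric space and let X ⊆ M be a closed subset, where X×X ⊆ M×M carries the metric d((x,y),(x',y')) = d(x,x') + d(y,y'). Let E ⊆ X×X be a controlled set (i.e. sup{d(x,y) : (x,y) ∈ E} < ∞), and let f : X×X → ℝ be a bounded, uniformly continuous function with f = 0 outside E. Then there exists a bounded, uniformly continuous function h : M×M → ℝ such that h restricted to X×X equals f and h(z) = 0 for every z ∈ M×M with dist(z, E) ≥ 1; in particular h vanishes outside a controlled subset of M×M. -/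
/-!
A bounded uniformly continuous `f` on `A` has a subadditive modulus of continuity: the infimum
`ω` of all affine bounds `ε + L t` for its oscillation, which tends to `0` at `0` because large
distances are paid for by the slope. The inf-convolution `F z = ⨅ a, f a + ω (dist z a)` then
extends `f` with `|F z - F w| ≤ ω (dist z w)`. Multiplying `F` by a cutoff in `infDist z E`
that is `1` on `E` and `0` at distance `≥ 1/2` keeps it equal to `f` on `X × X`, because `f`
vanishes there off `E`. The sum metric of the statement is equivalent to the max metric on
`M × M`, and the `1/2`-neighbourhood of `E` is controlled.
-/

open Metric Set

section ConcaveModulus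

variable {α : Type*} [PseudoMetricSpace α] {f : α → ℝ} {s t : ℝ}

/-- The affine majorants `ε + L t` of the modulus of continuity of `f`. -/
def affineModulusBounds (f : α → ℝ) : Set (ℝ × ℝ) :=
  {p | 0 ≤ p.1 ∧ 0 ≤ p.2 ∧ ∀ x y, |f x - f y| ≤ p.1 + p.2 * dist x y}

noncomputable def concaveModulus (f : α → ℝ) (t : ℝ) : ℝ :=
  ⨅ p : affineModulusBounds f, (p : ℝ × ℝ).1 + (p : ℝ × ℝ).2 * t

theorem concaveModulus_nonneg (ht : 0 ≤ t) : 0 ≤ concaveModulus f t :=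
  Real.iInf_nonneg fun p => add_nonneg p.2.1 (mul_nonneg p.2.2.1 ht)

theorem concaveModulus_le {p : ℝ × ℝ} (hp : p ∈ affineModulusBounds f) (ht : 0 ≤ t) :
    concaveModulus f t ≤ p.1 + p.2 * t := by
  refine ciInf_le ⟨0, ?_⟩ (⟨p, hp⟩ : affineModulusBounds f)
  rintro _ ⟨q, rfl⟩
  exact add_nonneg q.2.1 (mul_nonneg q.2.2.1 ht)

theorem le_concaveModulus (hP : (affineModulusBounds f).Nonempty) {c : ℝ}
    (h : ∀ p ∈ affineModulusBounds f, c ≤ p.1 + p.2 * t) : c ≤ concaveModulus f t :=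
  haveI := hP.to_subtype
  le_ciInf fun p => h p p.2

theorem abs_sub_le_concaveModulus (hP : (affineModulusBounds f).Nonempty) (x y : α) :
    |f x - f y| ≤ concaveModulus f (dist x y) :=
  le_concaveModulus hP fun _ hp => hp.2.2 x y

theorem concaveModulus_mono (hP : (affineModulusBounds f).Nonempty) (hs : 0 ≤ s) (hst : s ≤ t) :
    concaveModulus f s ≤ concaveModulus f t :=
  le_concaveModulus hP fun p hp =>
    (concaveModulus_le hp hs).trans (by gcongr; exact hp.2.1)

theorem concaveModulus_add_le (hP : (affineModulusBounds f).Nonempty) (hs : 0 ≤ s) (ht : 0 ≤ t) :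
    concaveModulus f (s + t) ≤ concaveModulus f s + concaveModulus f t := by
  rw [← sub_le_iff_le_add]
  refine le_concaveModulus hP fun p hp => ?_
  rw [sub_le_iff_le_add, ← sub_le_iff_le_add']
  refine le_concaveModulus hP fun q hq => ?_
  rw [sub_le_iff_le_add']
  -- bound `ω (s + t)` by the affine function of smaller slope among `p` and `q`
  rcases le_total p.2 q.2 with hpq | hqp
  · calc concaveModulus f (s + t) ≤ p.1 + p.2 * (s + t) := concaveModulus_le hp (by positivity)
      _ ≤ p.1 + p.2 * s + (q.1 + q.2 * t) := by nlinarith [hq.1]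
  · calc concaveModulus f (s + t) ≤ q.1 + q.2 * (s + t) := concaveModulus_le hq (by positivity)
      _ ≤ p.1 + p.2 * s + (q.1 + q.2 * t) := by nlinarith [hp.1]

theorem concaveModulus_dist_le {β : Type*} [PseudoMetricSpace β]
    (hP : (affineModulusBounds f).Nonempty) (x y z : β) :
    concaveModulus f (dist x z) ≤ concaveModulus f (dist x y) + concaveModulus f (dist y z) :=
  (concaveModulus_mono hP dist_nonneg (dist_triangle x y z)).trans
    (concaveModulus_add_le hP dist_nonneg dist_nonneg)

theorem mem_affineModulusBounds_of_abs_le {C : ℝ} (hC0 : 0 ≤ C) (hC : ∀ x, |f x| ≤ C) :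
    (2 * C, 0) ∈ affineModulusBounds f :=
  ⟨by positivity, le_rfl, fun x y => by
    simpa [two_mul] using (abs_sub _ _).trans (add_le_add (hC x) (hC y))⟩

theorem affineModulusBounds_nonempty [Nonempty α] {C : ℝ} (hC : ∀ x, |f x| ≤ C) :
    (affineModulusBounds f).Nonempty :=
  ⟨_, mem_affineModulusBounds_of_abs_le ((abs_nonneg _).trans (hC (Classical.arbitrary α))) hC⟩

/-- Beyond the scale `δ` of uniform continuity, the oscillation `2 C` is paid for by a slope. -/
theorem exists_mem_affineModulusBounds [Nonempty α] (hf : UniformContinuous f) {C : ℝ}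
    (hC : ∀ x, |f x| ≤ C) {ε : ℝ} (hε : 0 < ε) : ∃ L, (ε, L) ∈ affineModulusBounds f := by
  have hC0 : 0 ≤ C := (abs_nonneg _).trans (hC (Classical.arbitrary α))
  obtain ⟨δ, hδ, hfδ⟩ := Metric.uniformContinuous_iff.mp hf ε hε
  refine ⟨2 * C / δ, hε.le, by positivity, fun x y => ?_⟩
  have hslope : 0 ≤ 2 * C / δ * dist x y := by positivity
  rcases lt_or_ge (dist x y) δ with hxy | hxy
  · have := hfδ hxy
    rw [Real.dist_eq] at this
    linarith
  · have h2C := (mem_affineModulusBounds_of_abs_le hC0 hC).2.2 x y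
    have : 2 * C ≤ 2 * C / δ * dist x y := by
      rw [div_mul_eq_mul_div, le_div_iff₀ hδ]; gcongr
    simp only [zero_mul, add_zero] at h2C
    linarith

theorem exists_concaveModulus_lt [Nonempty α] (hf : UniformContinuous f) {C : ℝ}
    (hC : ∀ x, |f x| ≤ C) {ε : ℝ} (hε : 0 < ε) :
    ∃ δ > 0, ∀ t, 0 ≤ t → t < δ → concaveModulus f t < ε := by
  obtain ⟨L, hL⟩ := exists_mem_affineModulusBounds hf hC (half_pos hε)
  have hL1 : 0 < L + 1 := by linarith [hL.2.1]
  refine ⟨ε / 2 / (L + 1), by positivity, fun t ht htδ => ?_⟩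
  have : (L + 1) * t < ε / 2 := (lt_div_iff₀' hL1).mp htδ
  calc concaveModulus f t ≤ ε / 2 + L * t := concaveModulus_le hL ht
    _ < ε := by nlinarith

theorem concaveModulus_zero [Nonempty α] (hf : UniformContinuous f) {C : ℝ}
    (hC : ∀ x, |f x| ≤ C) : concaveModulus f 0 = 0 := by
  refine le_antisymm (le_of_forall_pos_lt_add fun ε hε => ?_) (concaveModulus_nonneg le_rfl)
  obtain ⟨δ, hδ, hωδ⟩ := exists_concaveModulus_lt hf hC hε
  simpa using hωδ 0 le_rfl hδ

end ConcaveModulus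

section Extension

variable {α : Type*} [PseudoMetricSpace α] {A : Set α} {f : A → ℝ}

/-- McShane's extension formula, with the concave modulus in place of a Lipschitz bound. -/
noncomputable def modulusExtension (f : A → ℝ) (z : α) : ℝ :=
  ⨅ a : A, f a + concaveModulus f (dist z a)

variable [Nonempty A]

theorem bddBelow_modulusExtension (hP : (affineModulusBounds f).Nonempty) (z : α) :
    BddBelow (range fun a : A => f a + concaveModulus f (dist z a)) := by
  obtain a₀ := Classical.arbitrary A
  refine ⟨f a₀ - concaveModulus f (dist z a₀), ?_⟩
  rintro _ ⟨a, rfl⟩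
  have h₁ : |f a₀ - f a| ≤ concaveModulus f (dist (a₀ : α) a) := abs_sub_le_concaveModulus hP a₀ a
  have h₂ := concaveModulus_dist_le hP (a₀ : α) z a
  rw [dist_comm (a₀ : α) z] at h₂
  dsimp only
  linarith [le_abs_self (f a₀ - f a)]

theorem modulusExtension_le (hP : (affineModulusBounds f).Nonempty) (z : α) (a : A) :
    modulusExtension f z ≤ f a + concaveModulus f (dist z a) :=
  ciInf_le (bddBelow_modulusExtension hP z) a

theorem modulusExtension_coe (hP : (affineModulusBounds f).Nonempty)
    (h0 : concaveModulus f 0 = 0) (a : A) : modulusExtension f a = f a := by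
  refine le_antisymm ?_ (le_ciInf fun b => ?_)
  · simpa [h0] using modulusExtension_le hP a a
  · have : |f a - f b| ≤ concaveModulus f (dist (a : α) b) := abs_sub_le_concaveModulus hP a b
    linarith [le_abs_self (f a - f b)]

theorem modulusExtension_le_add (hP : (affineModulusBounds f).Nonempty) (z w : α) :
    modulusExtension f z ≤ modulusExtension f w + concaveModulus f (dist z w) := by
  rw [← sub_le_iff_le_add]
  refine le_ciInf fun a => ?_
  linarith [modulusExtension_le hP z a, concaveModulus_dist_le hP z w a]

theorem abs_sub_modulusExtension_le (hP : (affineModulusBounds f).Nonempty) (z w : α) :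
    |modulusExtension f z - modulusExtension f w| ≤ concaveModulus f (dist z w) := by
  rw [abs_sub_le_iff]
  constructor
  · linarith [modulusExtension_le_add hP z w]
  · linarith [dist_comm w z ▸ modulusExtension_le_add hP w z]

theorem abs_modulusExtension_le {C : ℝ} (hC : ∀ a, |f a| ≤ C) (z : α) :
    |modulusExtension f z| ≤ 3 * C := by
  obtain a₀ := Classical.arbitrary A
  have hC0 : 0 ≤ C := (abs_nonneg _).trans (hC a₀)
  have hp := mem_affineModulusBounds_of_abs_le hC0 hC
  rw [abs_le]
  constructor
  · refine le_ciInf fun a => ?_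
    have := concaveModulus_nonneg (f := f) (dist_nonneg (x := z) (y := a))
    linarith [neg_abs_le (f a), hC a]
  · have := concaveModulus_le hp (dist_nonneg (x := z) (y := a₀))
    linarith [modulusExtension_le ⟨_, hp⟩ z a₀, le_abs_self (f a₀), hC a₀]

theorem uniformContinuous_modulusExtension (hf : UniformContinuous f) {C : ℝ}
    (hC : ∀ a, |f a| ≤ C) : UniformContinuous (modulusExtension f) := by
  refine Metric.uniformContinuous_iff.2 fun ε hε => ?_
  obtain ⟨δ, hδ, hωδ⟩ := exists_concaveModulus_lt hf hC hε
  exact ⟨δ, hδ, fun _ _ hzw => (abs_sub_modulusExtension_le (affineModulusBounds_nonempty hC) _ _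
    |>.trans_lt (hωδ _ dist_nonneg hzw))⟩

end Extension

theorem exists_uniformContinuous_extension {α : Type*} [PseudoMetricSpace α] {A : Set α}
    (f : A → ℝ) (hf : UniformContinuous f) {C : ℝ} (hC : ∀ a, |f a| ≤ C) :
    ∃ F : α → ℝ, UniformContinuous F ∧ (∃ K, ∀ z, |F z| ≤ K) ∧ ∀ a : A, F a = f a := by
  rcases isEmpty_or_nonempty A with hA | _
  · exact ⟨0, uniformContinuous_const, ⟨0, by simp⟩, hA.elim⟩
  exact ⟨modulusExtension f, uniformContinuous_modulusExtension hf hC,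
    ⟨3 * C, abs_modulusExtension_le hC⟩,
    modulusExtension_coe (affineModulusBounds_nonempty hC) (concaveModulus_zero hf hC)⟩

theorem UniformContinuous.mul_of_abs_le {α : Type*} [UniformSpace α] {f g : α → ℝ}
    (hf : UniformContinuous f) (hg : UniformContinuous g) {C D : ℝ} (hC : ∀ x, |f x| ≤ C)
    (hD : ∀ x, |g x| ≤ D) : UniformContinuous fun x => f x * g x := by
  set K : Set (ℝ × ℝ) := closedBall 0 C ×ˢ closedBall 0 D
  have hK : ∀ x, (f x, g x) ∈ K := fun x => by simp [K, hC x, hD x]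
  have hmul : UniformContinuousOn (fun p : ℝ × ℝ => p.1 * p.2) K :=
    ((isCompact_closedBall 0 C).prod (isCompact_closedBall 0 D)).uniformContinuousOn_of_continuous
      continuous_mul.continuousOn
  exact hmul.restrict.comp ((hf.prodMk hg).subtype_mk hK)

section Cutoff

variable {α : Type*} [PseudoMetricSpace α] (E : Set α) (r : ℝ)

noncomputable def infDistCutoff (z : α) : ℝ :=
  max 0 (1 - infDist z E / r)

theorem uniformContinuous_infDistCutoff : UniformContinuous (infDistCutoff E r) :=
  lipschitzWith_max.uniformContinuous.comp
    (uniformContinuous_const.prodMk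
      (uniformContinuous_const.sub ((uniformContinuous_infDist_pt E).div_const' r)))

variable {E r}

theorem abs_infDistCutoff_le_one (hr : 0 ≤ r) (z : α) : |infDistCutoff E r z| ≤ 1 := by
  rw [abs_of_nonneg (le_max_left _ _)]
  exact max_le zero_le_one (by linarith [div_nonneg (infDist_nonneg (x := z) (s := E)) hr])

theorem infDistCutoff_of_mem {z : α} (hz : z ∈ E) : infDistCutoff E r z = 1 := by
  simp [infDistCutoff, infDist_zero_of_mem hz]

theorem infDistCutoff_of_le_infDist (hr : 0 < r) {z : α} (hz : r ≤ infDist z E) :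
    infDistCutoff E r z = 0 :=
  max_eq_left (by rw [sub_nonpos, le_div_iff₀ hr, one_mul]; exact hz)

end Cutoff

theorem exists_uniformContinuous_extension_eq_zero_of_le_dist {α : Type*} [PseudoMetricSpace α]
    {A E : Set α} (f : A → ℝ) (hf : UniformContinuous f) {C : ℝ} (hC : ∀ a, |f a| ≤ C)
    (hf0 : ∀ a : A, (a : α) ∉ E → f a = 0) {r : ℝ} (hr : 0 < r) :
    ∃ h : α → ℝ, UniformContinuous h ∧ (∃ K, ∀ z, |h z| ≤ K) ∧ (∀ a : A, h a = f a) ∧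
      ∀ z, (∀ e ∈ E, r ≤ dist z e) → h z = 0 := by
  rcases E.eq_empty_or_nonempty with rfl | hE
  · exact ⟨0, uniformContinuous_const, ⟨0, by simp⟩, fun a => (hf0 a (notMem_empty _)).symm,
      fun _ _ => rfl⟩
  obtain ⟨F, hFU, ⟨K, hK⟩, hFf⟩ := exists_uniformContinuous_extension f hf hC
  refine ⟨fun z => infDistCutoff E r z * F z,
    (uniformContinuous_infDistCutoff E r).mul_of_abs_le hFU (abs_infDistCutoff_le_one hr.le) hK,
    ⟨K, fun z => ?_⟩, fun a => ?_, fun z hz => ?_⟩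
  · rw [abs_mul]
    exact (mul_le_of_le_one_left (abs_nonneg _) (abs_infDistCutoff_le_one hr.le z)).trans (hK z)
  · by_cases ha : (a : α) ∈ E
    · simp [infDistCutoff_of_mem ha, hFf]
    · simp [hFf, hf0 a ha]
  · simp [infDistCutoff_of_le_infDist hr ((le_infDist hE).2 hz)]

section SumDistance

variable {α β : Type*} [PseudoMetricSpace α] [PseudoMetricSpace β]

theorem dist_le_dist_fst_add_dist_snd (z w : α × β) : dist z w ≤ dist z.1 w.1 + dist z.2 w.2 := by
  rw [Prod.dist_eq]
  exact max_le_add_of_nonneg dist_nonneg dist_nonneg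

theorem dist_fst_add_dist_snd_le (z w : α × β) : dist z.1 w.1 + dist z.2 w.2 ≤ 2 * dist z w := by
  rw [Prod.dist_eq, two_mul]
  exact add_le_add (le_max_left _ _) (le_max_right _ _)

theorem Isometry.uniformContinuous_iff_dist_fst_add_dist_snd {γ : Type*} [PseudoMetricSpace γ]
    {e : γ → α × β} (he : Isometry e) {f : γ → ℝ} :
    UniformContinuous f ↔ ∀ ε > 0, ∃ δ > 0, ∀ x y,
      dist (e x).1 (e y).1 + dist (e x).2 (e y).2 < δ → |f x - f y| < ε := by
  simp only [Metric.uniformContinuous_iff, Real.dist_eq, ← he.dist_eq]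
  refine forall₂_congr fun ε _ => ⟨fun ⟨δ, hδ, h⟩ => ⟨δ, hδ, fun x y hxy => ?_⟩,
    fun ⟨δ, hδ, h⟩ => ⟨δ / 2, half_pos hδ, fun {x y} hxy => ?_⟩⟩
  · exact h ((dist_le_dist_fst_add_dist_snd _ _).trans_lt hxy)
  · exact h x y (by linarith [dist_fst_add_dist_snd_le (e x) (e y)])

end SumDistance

theorem dist_fst_snd_le {α : Type*} [PseudoMetricSpace α] (z e : α × α) :
    dist z.1 z.2 ≤ dist e.1 e.2 + 2 * dist z e := by
  have h := dist_triangle4 z.1 e.1 e.2 z.2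
  rw [dist_comm e.2] at h
  linarith [dist_fst_add_dist_snd_le z e]

theorem stmt_9_general {M : Type*} [MetricSpace M] (X : Set M)
    (E : Set (M × M))
    (hEctrl : ∃ S : ℝ, ∀ p ∈ E, dist p.1 p.2 ≤ S)
    (f : (X ×ˢ X : Set (M × M)) → ℝ)
    (hfB : ∃ C : ℝ, ∀ p, |f p| ≤ C)
    (hfU : ∀ ε > (0 : ℝ), ∃ δ > (0 : ℝ), ∀ p q : (X ×ˢ X : Set (M × M)),
      dist (p : M × M).1 (q : M × M).1 + dist (p : M × M).2 (q : M × M).2 < δ →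
      |f p - f q| < ε)
    (hf0 : ∀ p : (X ×ˢ X : Set (M × M)), (p : M × M) ∉ E → f p = 0) :
    ∃ h : M × M → ℝ,
      (∃ C : ℝ, ∀ z : M × M, |h z| ≤ C) ∧
      (∀ ε > (0 : ℝ), ∃ δ > (0 : ℝ), ∀ z z' : M × M,
        dist z.1 z'.1 + dist z.2 z'.2 < δ → |h z - h z'| < ε) ∧
      (∀ p : (X ×ˢ X : Set (M × M)), h p = f p) ∧
      (∀ z : M × M, (∀ e ∈ E, 1 ≤ dist z.1 e.1 + dist z.2 e.2) → h z = 0) ∧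
      ∃ E' : Set (M × M), (∃ S : ℝ, ∀ p ∈ E', dist p.1 p.2 ≤ S) ∧
        ∀ z ∉ E', h z = 0 := by
  obtain ⟨C, hC⟩ := hfB
  obtain ⟨S, hS⟩ := hEctrl
  obtain ⟨h, hU, hB, hf, hfar⟩ := exists_uniformContinuous_extension_eq_zero_of_le_dist f
    (isometry_subtype_coe.uniformContinuous_iff_dist_fst_add_dist_snd.2 hfU) hC hf0
    (one_half_pos : (0 : ℝ) < 1 / 2)
  refine ⟨h, hB, isometry_id.uniformContinuous_iff_dist_fst_add_dist_snd.1 hU, hf,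
    fun z hz => hfar z fun e he => ?_, {z | ∃ e ∈ E, dist z e < 1 / 2}, ⟨S + 1, ?_⟩, ?_⟩
  · linarith [hz e he, dist_fst_add_dist_snd_le z e]
  · rintro z ⟨e, he, hze⟩
    linarith [dist_fst_snd_le z e, hS e he]
  · intro z hz
    exact hfar z fun e he => not_lt.1 fun hze => hz ⟨e, he, hze⟩

/-- Let `M` be a metric space, `X ⊆ M` a closed subset, where `X × X` and
`M × M` carry the sum metric `d((x,y),(x',y')) = d(x,x') + d(y,y')` (expressed below via
explicit ε-δ conditions). Let `E ⊆ X × X` be a controlled set and `f : X × X → ℝ` a bounded,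
uniformly continuous function vanishing outside `E`. Then there is a bounded, uniformly
continuous `h : M × M → ℝ` restricting to `f` on `X × X`, vanishing at every point at
distance `≥ 1` from `E`; in particular `h` vanishes outside a controlled subset of `M × M`. -/
theorem stmt_9 {M : Type*} [MetricSpace M] (X : Set M) (hX : IsClosed X)
    (E : Set (M × M)) (hEX : E ⊆ X ×ˢ X)
    (hEctrl : ∃ S : ℝ, ∀ p ∈ E, dist p.1 p.2 ≤ S)
    (f : (X ×ˢ X : Set (M × M)) → ℝ)
    (hfB : ∃ C : ℝ, ∀ p, |f p| ≤ C)
    (hfU : ∀ ε > (0 : ℝ), ∃ δ > (0 : ℝ), ∀ p q : (X ×ˢ X : Set (M × M)),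
      dist (p : M × M).1 (q : M × M).1 + dist (p : M × M).2 (q : M × M).2 < δ →
      |f p - f q| < ε)
    (hf0 : ∀ p : (X ×ˢ X : Set (M × M)), (p : M × M) ∉ E → f p = 0) :
    ∃ h : M × M → ℝ,
      (∃ C : ℝ, ∀ z : M × M, |h z| ≤ C) ∧
      (∀ ε > (0 : ℝ), ∃ δ > (0 : ℝ), ∀ z z' : M × M,
        dist z.1 z'.1 + dist z.2 z'.2 < δ → |h z - h z'| < ε) ∧
      (∀ p : (X ×ˢ X : Set (M × M)), h p = f p) ∧
      (∀ z : M × M, (∀ e ∈ E, 1 ≤ dist z.1 e.1 + dist z.2 e.2) → h z = 0) ∧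
      ∃ E' : Set (M × M), (∃ S : ℝ, ∀ p ∈ E', dist p.1 p.2 ≤ S) ∧
        ∀ z ∉ E', h z = 0 :=
  stmt_9_general X E hEctrl f hfB hfU hf0
end

section
/- Let M be a locally compact, proper metric space (all closed balls compact) with bounded geometry. Then there exists a Borel measure μ on M such that for every R > 0: (i) sup_{x∈M} μ(B(x,R)) < ∞, and (ii) inf_{x∈M} μ(B(x,R)) > 0, where B(x,R) is the open ball of center x and radius R. -/
/-!
Take `1/(k+1)`-dense uniformly locally finite sets `X k` and put `μ = ∑ₖ wₖ • count|X k`. By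
density every ball of radius `R > 1/(k+1)` contains a point of `X k`, so has mass `≥ wₖ`. By
uniform local finiteness, `|B(x, R) ∩ X k|` is bounded independently of `x`; if `Nₖ` bounds it
at radius `k + 1` and `wₖ = 2⁻ᵏ/(Nₖ + 1)`, then for a fixed `R` all but finitely many terms of
`∑ₖ wₖ |B(x, R) ∩ X k|` are at most `2⁻ᵏ`, and the remaining ones are bounded uniformly in `x`.
-/

/-- A subset `X` of a metric space is uniformly locally finite (as a metric subspace). -/
def IsULF {M : Type*} [PseudoMetricSpace M] (X : Set M) : Prop :=
  ∀ R > (0 : ℝ), ∃ N : ℕ, ∀ x ∈ X,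
    (X ∩ Metric.closedBall x R).Finite ∧ (X ∩ Metric.closedBall x R).ncard ≤ N

/-- A subset `X ⊆ M` is `ε`-dense: every point of `M` lies at distance `< ε` from `X`. -/
def IsEpsDense {M : Type*} [PseudoMetricSpace M] (ε : ℝ) (X : Set M) : Prop :=
  ∀ m : M, ∃ x ∈ X, dist m x < ε

/-- A metric space has bounded geometry if for every `ε > 0` there exists an `ε`-dense
uniformly locally finite subset. -/
def BoundedGeometry (M : Type*) [PseudoMetricSpace M] : Prop :=
  ∀ ε > (0 : ℝ), ∃ X : Set M, IsEpsDense ε X ∧ IsULF X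

open MeasureTheory Metric Set Filter
open scoped ENNReal

lemma ENNReal.tsum_ne_top_of_eventually_le {f g : ℕ → ℝ≥0∞} (hf : ∀ k, f k ≠ ∞)
    (hfg : ∀ᶠ k in atTop, f k ≤ g k) (hg : ∑' k, g k ≠ ∞) : ∑' k, f k ≠ ∞ := by
  obtain ⟨n, hn⟩ := eventually_atTop.mp hfg
  rw [← ENNReal.sum_add_tsum_compl (Finset.range n)]
  refine ENNReal.add_ne_top.mpr
    ⟨ENNReal.sum_ne_top.mpr fun k _ => hf k, ne_top_of_le_ne_top hg ?_⟩
  calc ∑' k : ↥((Finset.range n : Set ℕ)ᶜ), f k ≤ ∑' k : ↥((Finset.range n : Set ℕ)ᶜ), g k :=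
        ENNReal.tsum_le_tsum fun k => hn k (by simpa using k.2)
    _ ≤ ∑' k, g k := ENNReal.tsum_comp_le_tsum_of_injective Subtype.val_injective g

section

variable {M : Type*} [PseudoMetricSpace M]

lemma IsULF.exists_encard_ball_inter_le {X : Set M} (hX : IsULF X) {R : ℝ} (hR : 0 < R) :
    ∃ N : ℕ, ∀ x : M, (ball x R ∩ X).encard ≤ N := by
  obtain ⟨N, hN⟩ := hX (2 * R) (by positivity)
  refine ⟨N, fun x => ?_⟩
  rcases (ball x R ∩ X).eq_empty_or_nonempty with hempty | ⟨y, hy, hyX⟩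
  · simp [hempty]
  obtain ⟨hfin, hcard⟩ := hN y hyX
  have hsub : ball x R ∩ X ⊆ X ∩ closedBall y (2 * R) := fun p ⟨hp, hpX⟩ =>
    ⟨hpX, mem_closedBall.mpr <| (dist_triangle_right p y x).trans (by
      rw [mem_ball] at hp hy; linarith)⟩
  calc (ball x R ∩ X).encard ≤ (X ∩ closedBall y (2 * R)).encard := encard_le_encard hsub
    _ = (X ∩ closedBall y (2 * R)).ncard := hfin.cast_ncard_eq.symm
    _ ≤ N := by exact_mod_cast hcard

lemma IsEpsDense.ball_inter_nonempty {ε R : ℝ} {X : Set M} (hX : IsEpsDense ε X) (hεR : ε ≤ R)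
    (x : M) : (ball x R ∩ X).Nonempty := by
  obtain ⟨y, hyX, hy⟩ := hX x
  exact ⟨y, mem_ball'.mpr (hy.trans_le hεR), hyX⟩

lemma exists_weights_tsum_iSup_encard_ball_inter_ne_top {X : ℕ → Set M} (hX : ∀ k, IsULF (X k)) :
    ∃ w : ℕ → ℝ≥0∞, (∀ k, w k ≠ 0) ∧
      ∀ R > (0 : ℝ), ∑' k, ⨆ x, w k * (ball x R ∩ X k).encard ≠ ∞ := by
  choose N hN using fun k : ℕ => (hX k).exists_encard_ball_inter_le (R := k + 1) (by positivity)
  refine ⟨fun k => 2⁻¹ ^ k / (N k + 1), fun k => by simp, fun R hR => ?_⟩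
  refine ENNReal.tsum_ne_top_of_eventually_le (g := fun k => 2⁻¹ ^ k) (fun k => ?_) ?_
    (by simp)
  · obtain ⟨N', hN'⟩ := (hX k).exists_encard_ball_inter_le hR
    refine ne_top_of_le_ne_top (b := 2⁻¹ ^ k / (N k + 1) * N') ?_
      (iSup_le fun x => mul_le_mul_right (by exact_mod_cast hN' x) _)
    exact ENNReal.mul_ne_top (ENNReal.div_ne_top (by simp) (by simp)) (by simp)
  · filter_upwards [eventually_ge_atTop ⌈R⌉₊] with k hk
    refine iSup_le fun x => ?_
    have hRk : R ≤ k + 1 := by linarith [Nat.ceil_le.mp hk]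
    have hcount : ((ball x R ∩ X k).encard : ℝ≥0∞) ≤ N k + 1 := calc
      ((ball x R ∩ X k).encard : ℝ≥0∞) ≤ (ball x (k + 1) ∩ X k).encard := by gcongr
      _ ≤ N k := by exact_mod_cast hN k x
      _ ≤ N k + 1 := le_self_add
    calc 2⁻¹ ^ k / (N k + 1) * ((ball x R ∩ X k).encard : ℝ≥0∞)
        ≤ 2⁻¹ ^ k / (N k + 1) * (N k + 1) := mul_le_mul_right hcount _
      _ = 2⁻¹ ^ k := ENNReal.div_mul_cancel (by simp) (by simp)

end

lemma MeasureTheory.Measure.count_eq_encard {α : Type*} [MeasurableSpace α]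
    [MeasurableSingletonClass α] (s : Set α) : Measure.count s = s.encard := by
  rcases s.finite_or_infinite with hs | hs
  · exact Measure.count_apply hs.measurableSet
  · rw [Measure.count_apply_infinite hs, hs.encard_eq, ENat.toENNReal_top]

lemma MeasureTheory.Measure.sum_smul_count_restrict_apply {α : Type*} [MeasurableSpace α]
    [MeasurableSingletonClass α] (w : ℕ → ℝ≥0∞) (X : ℕ → Set α) {s : Set α}
    (hs : MeasurableSet s) :
    Measure.sum (fun k => w k • Measure.count.restrict (X k)) s =
      ∑' k, w k * (s ∩ X k).encard := by
  simp only [Measure.sum_apply _ hs, Measure.smul_apply, Measure.restrict_apply hs, smul_eq_mul,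
    Measure.count_eq_encard]

theorem stmt_10_general {M : Type*} [MetricSpace M]
    [MeasurableSpace M] [BorelSpace M] (hM : BoundedGeometry M) :
    ∃ μ : MeasureTheory.Measure M, ∀ R > (0 : ℝ),
      (∃ C : ENNReal, C < ⊤ ∧ ∀ x : M, μ (Metric.ball x R) ≤ C) ∧
      (∃ c : ENNReal, 0 < c ∧ ∀ x : M, c ≤ μ (Metric.ball x R)) := by
  choose X hdense hULF using fun k : ℕ => hM (1 / (k + 1)) (by positivity)
  obtain ⟨w, hw0, hw⟩ := exists_weights_tsum_iSup_encard_ball_inter_ne_top hULF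
  refine ⟨Measure.sum fun k => w k • Measure.count.restrict (X k), fun R hR => ⟨?_, ?_⟩⟩
  · refine ⟨_, (hw R hR).lt_top, fun x => ?_⟩
    rw [Measure.sum_smul_count_restrict_apply w X measurableSet_ball]
    exact ENNReal.tsum_le_tsum fun k =>
      le_iSup (fun y => w k * ((ball y R ∩ X k).encard : ℝ≥0∞)) x
  · obtain ⟨k, hk⟩ := exists_nat_one_div_lt hR
    refine ⟨w k, pos_iff_ne_zero.mpr (hw0 k), fun x => ?_⟩
    have hpoint : (1 : ℝ≥0∞) ≤ (ball x R ∩ X k).encard := by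
      exact_mod_cast one_le_encard_iff_nonempty.mpr ((hdense k).ball_inter_nonempty hk.le x)
    rw [Measure.sum_smul_count_restrict_apply w X measurableSet_ball]
    calc w k = w k * 1 := (mul_one _).symm
      _ ≤ w k * (ball x R ∩ X k).encard := mul_le_mul_right hpoint _
      _ ≤ _ := ENNReal.le_tsum k

/-- Let `M` be a locally compact, proper metric space (all closed balls
compact) with bounded geometry. Then there is a Borel measure `μ` on `M` such that for every
`R > 0`, `sup_x μ(B(x,R)) < ∞` and `inf_x μ(B(x,R)) > 0`. -/
theorem stmt_10 {M : Type*} [MetricSpace M] [ProperSpace M]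
    [MeasurableSpace M] [BorelSpace M] (hM : BoundedGeometry M) :
    ∃ μ : MeasureTheory.Measure M, ∀ R > (0 : ℝ),
      (∃ C : ENNReal, C < ⊤ ∧ ∀ x : M, μ (Metric.ball x R) ≤ C) ∧
      (∃ c : ENNReal, 0 < c ∧ ∀ x : M, c ≤ μ (Metric.ball x R)) :=
  stmt_10_general hM
end

section
/- Let R > 0 and suppose the metric space M satisfies property (BG)_R. Then for every ε > 0 there exist finitely many strictly R-separated subsets Y₁, …, Y_N of M whose union Y = Y₁ ∪ ⋯ ∪ Y_N is ε-dense in M. -/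
/-- `M` satisfies property `(BG)_R`: for every `ε > 0` there is `C ∈ ℕ` such that every
closed ball of radius `R` in `M` can be covered by at most `C` balls of radius `ε`. -/
def PropBG (M : Type*) [PseudoMetricSpace M] (R : ℝ) : Prop :=
  ∀ ε > (0 : ℝ), ∃ C : ℕ, ∀ x : M, ∃ t : Finset M,
    t.card ≤ C ∧ Metric.closedBall x R ⊆ ⋃ y ∈ t, Metric.closedBall y ε

/-- Every set `A` contains a maximal strictly `r`-separated subset: any point of `A`
not in it is within distance `r` of it. -/
lemma exists_maximal_sep {M : Type*} [MetricSpace M] (r : ℝ) (A : Set M) :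
    ∃ Y ⊆ A, (∀ x ∈ Y, ∀ y ∈ Y, x ≠ y → r < dist x y) ∧
      ∀ a ∈ A, a ∉ Y → ∃ y ∈ Y, dist a y ≤ r := by
  obtain ⟨Y, -, hY⟩ := zorn_subset_nonempty
      {S : Set M | S ⊆ A ∧ ∀ x ∈ S, ∀ y ∈ S, x ≠ y → r < dist x y}
      (fun c hc hchain _ => by
        refine ⟨⋃₀ c, ⟨?_, ?_⟩, fun s hs => Set.subset_sUnion_of_mem hs⟩
        · exact Set.sUnion_subset fun s hs => (hc hs).1
        · rintro x ⟨s, hs, hxs⟩ y ⟨t, ht, hyt⟩ hxy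
          rcases hchain.total hs ht with h | h
          · exact (hc ht).2 x (h hxs) y hyt hxy
          · exact (hc hs).2 x hxs y (h hyt) hxy) ∅ ⟨Set.empty_subset _, by simp⟩
  refine ⟨Y, hY.prop.1, hY.prop.2, fun a ha haY => ?_⟩
  by_contra h
  push_neg at h
  have hmem : a ∈ insert a Y := Set.mem_insert _ _
  have : insert a Y ∈ {S : Set M | S ⊆ A ∧ ∀ x ∈ S, ∀ y ∈ S, x ≠ y → r < dist x y} := by
    constructor
    · exact Set.insert_subset ha hY.prop.1
    · rintro x (rfl | hx) y (rfl | hy) hxy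
      · exact absurd rfl hxy
      · exact h y hy
      · rw [dist_comm]; exact h x hx
      · exact hY.prop.2 x hx y hy hxy
  exact haY (hY.2 this (Set.subset_insert _ _) hmem)

/-- Let `R > 0` and suppose `M` satisfies `(BG)_R`. Then for every `ε > 0`
there exist finitely many strictly `R`-separated subsets `Y₁, …, Y_N` of `M` whose union is
`ε`-dense in `M`. -/
theorem stmt_11 {M : Type*} [MetricSpace M] (R : ℝ) (hR : 0 < R) (hBG : PropBG M R) :
    ∀ ε > (0 : ℝ), ∃ (N : ℕ) (Y : Fin N → Set M),
      (∀ i, ∀ x ∈ Y i, ∀ y ∈ Y i, x ≠ y → R < dist x y) ∧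
      IsEpsDense ε (⋃ i, Y i) := by
  intro ε hε
  set δ : ℝ := ε / 2 with hδdef
  have hδ : 0 < δ := by positivity
  -- maximal strictly δ-separated set X; it is ε-dense
  obtain ⟨X, -, hXsep, hXmax⟩ := exists_maximal_sep δ (Set.univ : Set M)
  have hXdense : ∀ m : M, ∃ x ∈ X, dist m x < ε := by
    intro m
    by_cases hm : m ∈ X
    · exact ⟨m, hm, by simpa using hε⟩
    · obtain ⟨y, hy, hdy⟩ := hXmax m (Set.mem_univ m) hm
      exact ⟨y, hy, lt_of_le_of_lt hdy (by linarith)⟩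
  -- bounded geometry: X ∩ closedBall z R has at most C points
  obtain ⟨C, hC⟩ := hBG (δ / 2) (by positivity)
  have hcount : ∀ z : M, (X ∩ Metric.closedBall z R).Finite ∧
      (X ∩ Metric.closedBall z R).ncard ≤ C := by
    intro z
    obtain ⟨t, htc, htcov⟩ := hC z
    set S := X ∩ Metric.closedBall z R with hS
    have hmem : ∀ x ∈ S, ∃ y ∈ t, x ∈ Metric.closedBall y (δ / 2) := by
      intro x hx
      have := htcov hx.2
      simpa using this
    classical
    choose f hf1 hf2 using hmem
    have hinj : Set.InjOn (fun x : M => if h : x ∈ S then f x h else z) S := by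
      intro a ha b hb hab
      simp only [dif_pos ha, dif_pos hb] at hab
      by_contra hne
      have h1 : dist a (f a ha) ≤ δ / 2 := by simpa [Metric.mem_closedBall] using hf2 a ha
      have h2 : dist b (f b hb) ≤ δ / 2 := by simpa [Metric.mem_closedBall] using hf2 b hb
      have : dist a b ≤ δ := by
        rw [hab] at h1
        have h3 := dist_triangle a (f b hb) b
        rw [dist_comm (f b hb) b] at h3
        linarith
      exact absurd (hXsep a ha.1 b hb.1 hne) (by linarith)
    have hmaps : ∀ x ∈ S, (fun x : M => if h : x ∈ S then f x h else z) x ∈ (t : Set M) := by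
      intro x hx; simp only [dif_pos hx]; exact_mod_cast hf1 x hx
    have hfin : S.Finite := by
      refine Set.Finite.of_finite_image ?_ hinj
      exact t.finite_toSet.subset (Set.image_subset_iff.mpr hmaps)
    refine ⟨hfin, ?_⟩
    calc S.ncard ≤ (t : Set M).ncard := Set.ncard_le_ncard_of_injOn _ hmaps hinj t.finite_toSet
      _ = t.card := by simp [Set.ncard_coe_finset]
      _ ≤ C := htc
  classical
  -- iterated extraction of maximal strictly R-separated subsets
  have hF : ∀ A : Set M, ∃ Y ⊆ A, (∀ x ∈ Y, ∀ y ∈ Y, x ≠ y → R < dist x y) ∧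
      ∀ a ∈ A, a ∉ Y → ∃ y ∈ Y, dist a y ≤ R := fun A => exists_maximal_sep R A
  choose F hFsub hFsep hFmax using hF
  let rest : ℕ → Set M := fun n => Nat.rec X (fun _ A => A \ F A) n
  have hrest_succ : ∀ n, rest (n + 1) = rest n \ F (rest n) := fun n => rfl
  have hrestX : ∀ n, rest n ⊆ X := by
    intro n; induction n with
    | zero => exact le_refl _
    | succ n ih => exact (Set.diff_subset).trans ih
  have hrest_mono : ∀ m n, m ≤ n → rest n ⊆ rest m := by
    intro m n hmn
    induction n with
    | zero => simp at hmn; subst hmn; exact le_refl _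
    | succ n ih =>
      rcases Nat.lt_or_ge m (n+1) with h | h
      · exact (Set.diff_subset).trans (ih (Nat.lt_succ_iff.mp h))
      · have : m = n + 1 := le_antisymm hmn h
        subst this; exact le_refl _
  -- rest C is empty
  have hrestC : rest C = ∅ := by
    rw [Set.eq_empty_iff_forall_notMem]
    intro x hx
    have hxi : ∀ i, i ≤ C → x ∈ rest i := fun i hi => hrest_mono i C hi hx
    have hy : ∀ i : Fin C, ∃ y ∈ F (rest i), dist x y ≤ R := by
      intro i
      have hx1 : x ∈ rest (i + 1) := hxi (i + 1) i.2
      rw [hrest_succ] at hx1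
      exact hFmax (rest i) x hx1.1 hx1.2
    choose y hy1 hy2 using hy
    set S := X ∩ Metric.closedBall x R with hSdef
    have hyS : ∀ i, y i ∈ S := fun i =>
      ⟨hrestX i (hFsub _ (hy1 i)), by simpa [Metric.mem_closedBall, dist_comm] using hy2 i⟩
    have hxS : x ∈ S := ⟨hrestX C hx, by simp [hR.le]⟩
    -- y i are pairwise distinct and distinct from x
    have hyF : ∀ i j : Fin C, (i : ℕ) < (j : ℕ) → y j ∉ F (rest i) := by
      intro i j hij hmem
      have : y j ∈ rest (i + 1) := hrest_mono (i + 1) j hij (hFsub _ (hy1 j))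
      rw [hrest_succ] at this
      exact this.2 hmem
    have hyinj : Function.Injective y := by
      intro i j hij
      by_contra hne
      rcases lt_or_gt_of_ne (fun h : (i : ℕ) = (j : ℕ) => hne (Fin.ext h)) with h | h
      · exact hyF i j h (hij ▸ hy1 i)
      · exact hyF j i h (hij ▸ hy1 j)
    have hxy : ∀ i, x ≠ y i := by
      intro i hxy
      have hx1 : x ∈ rest (i + 1) := hxi (i + 1) i.2
      rw [hrest_succ] at hx1
      exact hx1.2 (hxy ▸ hy1 i)
    -- build an injection Fin (C+1) ↪ S
    let g : Fin (C + 1) → S := fun i =>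
      if h : (i : ℕ) < C then ⟨y ⟨i, h⟩, hyS _⟩ else ⟨x, hxS⟩
    have hginj : Function.Injective g := by
      intro a b hab
      by_contra hne
      dsimp only [g] at hab
      split_ifs at hab with h1 h2 h2
      · have := hyinj (Subtype.ext_iff.mp hab)
        exact hne (by simpa [Fin.ext_iff] using congrArg (Fin.val) this)
      · exact hxy ⟨a, h1⟩ (Subtype.ext_iff.mp hab).symm
      · exact hxy ⟨b, h2⟩ (Subtype.ext_iff.mp hab)
      · have ha : (a : ℕ) = C := le_antisymm (Nat.lt_succ_iff.mp a.2) (le_of_not_gt h1)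
        have hb : (b : ℕ) = C := le_antisymm (Nat.lt_succ_iff.mp b.2) (le_of_not_gt h2)
        exact hne (Fin.ext (ha.trans hb.symm))
    obtain ⟨hSfin, hScard⟩ := hcount x
    have : Fintype S := hSfin.fintype
    have hle : C + 1 ≤ Nat.card S := by
      have := Nat.card_le_card_of_injective g hginj
      simpa using this
    rw [Nat.card_coe_set_eq, hSdef] at hle
    omega
  -- conclude
  refine ⟨C, fun i => F (rest i), fun i => hFsep (rest i), fun m => ?_⟩
  obtain ⟨x, hxX, hxd⟩ := hXdense m
  have hcov : x ∈ ⋃ i : Fin C, F (rest i) := by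
    by_contra hxn
    simp only [Set.mem_iUnion, not_exists] at hxn
    have : ∀ n ≤ C, x ∈ rest n := by
      intro n hn
      induction n with
      | zero => exact hxX
      | succ n ih =>
        rw [hrest_succ]
        exact ⟨ih (Nat.le_of_succ_le hn), hxn ⟨n, hn⟩⟩
    have := this C le_rfl
    rw [hrestC] at this
    exact this
  exact ⟨x, hcov, hxd⟩
end

section
/- Let M be a metric space and R > 0. Suppose that for every ε > 0 there exists a finite union Y₁ ∪ ⋯ ∪ Y_N of R-separated subsets of M which is ε-dense in M. Then for every R' < R/2, the set Δ_{R'} = {(x,y) ∈ M×M : d(x,y) ≤ R'} belongs to ℰ′. -/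
/-- `E ⊆ M × M` belongs to `ℰ′`: it is controlled, and for every `ε > 0` there exist `η > 0`
and `N ∈ ℕ` such that `E ∪ E⁻¹` is the union of at most `N` sets `E_i`, each of which
satisfies: for all `a ∈ M`, `E_i ∘ B̄(a,η)` is contained in some closed ball of radius `ε`. -/
def MemE' {M : Type*} [PseudoMetricSpace M] (E : Set (M × M)) : Prop :=
  (∃ S : ℝ, ∀ p ∈ E, dist p.1 p.2 ≤ S) ∧
  ∀ ε > (0 : ℝ), ∃ η > (0 : ℝ), ∃ (N : ℕ) (Ei : Fin N → Set (M × M)),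
    (⋃ i, Ei i) = E ∪ {p : M × M | (p.2, p.1) ∈ E} ∧
    ∀ (i : Fin N) (a : M), ∃ c : M,
      {y : M | ∃ z : M, (y, z) ∈ Ei i ∧ dist z a ≤ η} ⊆ Metric.closedBall c ε

/-! Given `ε`, cover `M` by an `ε'`-dense union of `R`-separated sets `Y i` with `ε'` small, and
let the `i`-th piece of `Δ_{R'}` consist of the pairs whose first point is `ε'`-close to `Y i`.
If `(y, z)` lies in that piece and `z` is `η`-close to `a`, then the point `q ∈ Y i` near `y` lies
within `ε' + R' + η < R / 2` of `a`; by separation this `q` depends only on `a` and `i`, so the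
piece composed with `B̄(a, η)` lies in the ball of radius `ε'` about it. -/

open Metric Set

section

variable {M : Type*} [PseudoMetricSpace M]

theorem IsEpsDense.thickening_eq_univ {ε : ℝ} {X : Set M} (h : IsEpsDense ε X) :
    thickening ε X = univ :=
  eq_univ_of_forall fun m => mem_thickening_iff.2 (h m)

theorem iUnion_inter_preimage_fst_thickening_eq {ι : Type*} {ε : ℝ} {Y : ι → Set M}
    (hY : IsEpsDense ε (⋃ i, Y i)) (E : Set (M × M)) :
    ⋃ i, E ∩ Prod.fst ⁻¹' thickening ε (Y i) = E := by
  rw [← inter_iUnion, ← preimage_iUnion, ← thickening_iUnion, hY.thickening_eq_univ,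
    preimage_univ, inter_univ]

theorem subsingleton_inter_ball_of_pairwise_le_dist {R r : ℝ} {Y : Set M}
    (hY : Y.Pairwise fun x y => R ≤ dist x y) (hr : 2 * r ≤ R) (a : M) :
    (Y ∩ ball a r).Subsingleton := by
  rintro q ⟨hq, hqa⟩ q' ⟨hq', hq'a⟩
  by_contra hne
  have hR := hY hq hq' hne
  have := dist_triangle_right q q' a
  rw [mem_ball] at hqa hq'a
  linarith

theorem exists_subset_closedBall_of_subsingleton [Nonempty M] {S T : Set M} {ε : ℝ}
    (hT : T.Subsingleton) (hS : ∀ y ∈ S, ∃ q ∈ T, dist y q ≤ ε) :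
    ∃ c, S ⊆ closedBall c ε := by
  rcases hT.eq_empty_or_singleton with rfl | ⟨q, rfl⟩
  · refine ⟨Classical.arbitrary M, fun y hy => ?_⟩
    obtain ⟨q, hq, -⟩ := hS y hy
    exact absurd hq (notMem_empty q)
  · refine ⟨q, fun y hy => ?_⟩
    obtain ⟨q', rfl, hyq⟩ := hS y hy
    exact hyq

theorem exists_compRel_closedBall_subset_closedBall {R R' ε η : ℝ} {Y : Set M}
    (hY : Y.Pairwise fun x y => R ≤ dist x y) (h : 2 * (ε + R' + η) ≤ R) (a : M) :
    ∃ c, {y | ∃ z, (y, z) ∈ {p : M × M | dist p.1 p.2 ≤ R'} ∩ Prod.fst ⁻¹' thickening ε Y ∧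
      dist z a ≤ η} ⊆ closedBall c ε := by
  have : Nonempty M := ⟨a⟩
  refine exists_subset_closedBall_of_subsingleton
    (subsingleton_inter_ball_of_pairwise_le_dist hY h a) ?_
  rintro y ⟨z, ⟨hyz, hy⟩, hza⟩
  obtain ⟨q, hq, hyq⟩ := mem_thickening_iff.1 hy
  have hyz : dist y z ≤ R' := hyz
  have hyq : dist y q < ε := hyq
  refine ⟨q, ⟨hq, mem_ball.2 ?_⟩, hyq.le⟩
  calc dist q a ≤ dist q y + dist y z + dist z a := dist_triangle4 q y z a
    _ < ε + R' + η := by rw [dist_comm q y]; linarith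

end

/-- Suppose that for every `ε > 0` there exists a finite union
`Y₁ ∪ ⋯ ∪ Y_N` of `R`-separated subsets of `M` which is `ε`-dense. Then for every
`R' < R/2`, the set `Δ_{R'} = {(x,y) : d(x,y) ≤ R'}` belongs to `ℰ′`. -/
theorem stmt_12 {M : Type*} [MetricSpace M] (R : ℝ)
    (h : ∀ ε > (0 : ℝ), ∃ (N : ℕ) (Y : Fin N → Set M),
      (∀ i, ∀ x ∈ Y i, ∀ y ∈ Y i, x ≠ y → R ≤ dist x y) ∧
      IsEpsDense ε (⋃ i, Y i))
    (R' : ℝ) (hR' : R' < R / 2) :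
    MemE' {p : M × M | dist p.1 p.2 ≤ R'} := by
  refine ⟨⟨R', fun _ hp => hp⟩, fun ε hε => ?_⟩
  set δ := (R / 2 - R') / 4 with hδ_def
  have hδ : 0 < δ := by positivity
  obtain ⟨N, Y, hsep, hdense⟩ := h (min ε δ) (lt_min hε hδ)
  refine ⟨δ, hδ, N, fun i => {p | dist p.1 p.2 ≤ R'} ∩ Prod.fst ⁻¹' thickening (min ε δ) (Y i),
    ?_, fun i a => ?_⟩
  · have hsymm : {p : M × M | (p.2, p.1) ∈ {p : M × M | dist p.1 p.2 ≤ R'}} =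
        {p | dist p.1 p.2 ≤ R'} := by
      ext p
      simp [dist_comm]
    rw [hsymm, union_self, iUnion_inter_preimage_fst_thickening_eq hdense]
  · obtain ⟨c, hc⟩ := exists_compRel_closedBall_subset_closedBall
      (R := R) (R' := R') (ε := min ε δ) (η := δ)
      (fun x hx y hy => hsep i x hx y hy) (by linarith [min_le_right ε δ, hδ_def]) a
    exact ⟨c, hc.trans (closedBall_subset_closedBall (min_le_left ε δ))⟩
end

section
/- Let M be a metric space and R > 0. If Δ_R = {(x,y) ∈ M×M : d(x,y) ≤ R} belongs to ℰ′, then M satisfies property (BG)_R. -/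
/-- In the `ℰ′` decomposition, `(y, x) ∈ E` puts `y` in `E_i ∘ B̄(x, η)` for some `i`, so the
`N` centres attached to `x` cover the `E`-neighbourhood of `x` by `ε`-balls. -/
theorem MemE'.exists_finset_cover {M : Type*} [PseudoMetricSpace M] {E : Set (M × M)}
    (hE : MemE' E) {ε : ℝ} (hε : 0 < ε) :
    ∃ C : ℕ, ∀ x : M, ∃ t : Finset M,
      t.card ≤ C ∧ {y | (y, x) ∈ E} ⊆ ⋃ c ∈ t, Metric.closedBall c ε := by
  classical
  obtain ⟨η, hη, N, Ei, hcover, hcentre⟩ := hE.2 ε hε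
  refine ⟨N, fun x => ?_⟩
  choose c hc using fun i => hcentre i x
  refine ⟨Finset.univ.image c, Finset.card_image_le.trans (Finset.card_fin N).le, ?_⟩
  intro y hy
  obtain ⟨i, hi⟩ : ∃ i, (y, x) ∈ Ei i := by
    rw [← Set.mem_iUnion, hcover]
    exact Or.inl hy
  exact Set.mem_biUnion (Finset.mem_image_of_mem c (Finset.mem_univ i))
    (hc i ⟨x, hi, (dist_self x).trans_le hη.le⟩)

theorem stmt_13_general {M : Type*} [MetricSpace M] (R : ℝ)
    (h : MemE' {p : M × M | dist p.1 p.2 ≤ R}) :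
    PropBG M R :=
  fun _ hε => h.exists_finset_cover hε

/-- If `Δ_R = {(x,y) : d(x,y) ≤ R}` belongs to `ℰ′`, then `M` satisfies
property `(BG)_R`. -/
theorem stmt_13 {M : Type*} [MetricSpace M] (R : ℝ) (hR : 0 < R)
    (h : MemE' {p : M × M | dist p.1 p.2 ≤ R}) :
    PropBG M R :=
  stmt_13_general R h
end

section
/- Let M be a metric space. The following are equivalent: (i) there exists R > 0 such that Δ_R = {(x,y) ∈ M×M : d(x,y) ≤ R} belongs to ℰ′; (ii) there exists R > 0 such that M satisfies (BG)_R; (iii) there exists R > 0 such that for every ε > 0 there exists an ε-dense subset X of M which is a finite union of R-separated subsets. -/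
section Aux

open Metric Set

variable {M : Type*} [MetricSpace M]

/-- `R`-separated subset. -/
def IsSep {M : Type*} [PseudoMetricSpace M] (R : ℝ) (T : Set M) : Prop :=
  ∀ x ∈ T, ∀ y ∈ T, x ≠ y → R ≤ dist x y

/-- Every subset `S` contains a maximal `R`-separated subset. -/
lemma exists_maximal_sep_s14 (S : Set M) (R : ℝ) :
    ∃ T, T ⊆ S ∧ IsSep R T ∧ ∀ s ∈ S, s ∉ T → ∃ y ∈ T, y ≠ s ∧ dist s y < R := by
  have hchaincond : ∀ c ⊆ {T : Set M | T ⊆ S ∧ IsSep R T}, IsChain (· ⊆ ·) c →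
      ∃ ub ∈ {T : Set M | T ⊆ S ∧ IsSep R T}, ∀ s ∈ c, s ⊆ ub := by
    intro c hc hchain
    refine ⟨⋃₀ c, ⟨?_, ?_⟩, fun s hs => subset_sUnion_of_mem hs⟩
    · exact sUnion_subset fun t ht => (hc ht).1
    · intro x hx y hy hxy
      obtain ⟨t₁, ht₁, hxt⟩ := hx
      obtain ⟨t₂, ht₂, hyt⟩ := hy
      rcases hchain.total ht₁ ht₂ with h | h
      · exact (hc ht₂).2 x (h hxt) y hyt hxy
      · exact (hc ht₁).2 x hxt y (h hyt) hxy
  obtain ⟨T, hT⟩ := zorn_subset {T : Set M | T ⊆ S ∧ IsSep R T} hchaincond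
  refine ⟨T, hT.prop.1, hT.prop.2, ?_⟩
  intro s hs hsT
  by_contra hcon
  push_neg at hcon
  have hins : insert s T ∈ {T : Set M | T ⊆ S ∧ IsSep R T} := by
    refine ⟨insert_subset hs hT.prop.1, ?_⟩
    intro x hx y hy hxy
    rcases hx with rfl | hx
    · rcases hy with rfl | hy
      · exact absurd rfl hxy
      · exact hcon y hy (Ne.symm hxy)
    · rcases hy with rfl | hy
      · rw [dist_comm]; exact hcon x hx hxy
      · exact hT.prop.2 x hx y hy hxy
  exact hsT (hT.2 hins (subset_insert s T) (mem_insert s T))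

/-- Counting: an `ε`-separated set meets a ball of radius `R` in at most `C` points,
given a covering of the ball by `C` balls of radius `ε/3`. -/
lemma sep_inter_ball_card {R ε : ℝ} (hε : 0 < ε) {C : ℕ} {X : Set M}
    (hX : IsSep ε X) {x : M} {t : Finset M} (htc : t.card ≤ C)
    (hcov : closedBall x R ⊆ ⋃ y ∈ t, closedBall y (ε / 3)) :
    (X ∩ closedBall x R).Finite ∧ (X ∩ closedBall x R).ncard ≤ C := by
  classical
  have hex : ∀ z : M, ∃ y, z ∈ X ∩ closedBall x R → y ∈ t ∧ z ∈ closedBall y (ε / 3) := by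
    intro z
    by_cases hz : z ∈ X ∩ closedBall x R
    · obtain ⟨y, hy⟩ := mem_iUnion₂.mp (hcov hz.2)
      exact ⟨y, fun _ => ⟨hy.1, hy.2⟩⟩
    · exact ⟨x, fun h => absurd h hz⟩
  choose f hf using hex
  have hmaps : ∀ z ∈ X ∩ closedBall x R, f z ∈ (t : Set M) := fun z hz => (hf z hz).1
  have hinj : Set.InjOn f (X ∩ closedBall x R) := by
    intro z hz w hw hfw
    by_contra hne
    have h1 : dist z (f z) ≤ ε / 3 := (hf z hz).2
    have h2 : dist w (f w) ≤ ε / 3 := (hf w hw).2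
    have : dist z w ≤ dist z (f z) + dist (f w) w := by
      rw [hfw]; exact dist_triangle z (f w) w
    rw [dist_comm (f w) w] at this
    have := hX z hz.1 w hw.1 hne
    linarith
  have hfin : (X ∩ closedBall x R).Finite := by
    apply Set.Finite.of_finite_image _ hinj
    exact t.finite_toSet.subset (by rintro _ ⟨z, hz, rfl⟩; exact hmaps z hz)
  refine ⟨hfin, ?_⟩
  calc (X ∩ closedBall x R).ncard ≤ (t : Set M).ncard :=
        Set.ncard_le_ncard_of_injOn f hmaps hinj t.finite_toSet
    _ = t.card := Set.ncard_coe_finset t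
    _ ≤ C := htc

/-- Peeling construction: from a bound on the number of points of a maximal
`ε`-separated set in balls of radius `R`, decompose into `R`-separated pieces. -/
lemma exists_decomp {R ε : ℝ} (hR : 0 < R) (hε : 0 < ε) {C : ℕ}
    (hBG : ∀ x : M, ∃ t : Finset M, t.card ≤ C ∧
      closedBall x R ⊆ ⋃ y ∈ t, closedBall y (ε / 3)) :
    ∃ Y : Fin C → Set M, (∀ i, IsSep R (Y i)) ∧ IsEpsDense ε (⋃ i, Y i) := by
  classical
  obtain ⟨X, -, hXsep, hXmax⟩ := exists_maximal_sep_s14 (Set.univ : Set M) ε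
  have hXdense : ∀ m : M, ∃ x ∈ X, dist m x < ε := by
    intro m
    by_cases hm : m ∈ X
    · exact ⟨m, hm, by simpa using hε⟩
    · obtain ⟨y, hy, -, hd⟩ := hXmax m (mem_univ m) hm
      exact ⟨y, hy, by rwa [dist_comm] at hd ⊢⟩
  have hcount : ∀ x : M, (X ∩ closedBall x R).Finite ∧ (X ∩ closedBall x R).ncard ≤ C := by
    intro x
    obtain ⟨t, htc, hcov⟩ := hBG x
    exact sep_inter_ball_card hε hXsep htc hcov
  -- the peeling
  let pick : Set M → Set M := fun S => (exists_maximal_sep_s14 S R).choose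
  have hpick : ∀ S : Set M, pick S ⊆ S ∧ IsSep R (pick S) ∧
      ∀ s ∈ S, s ∉ pick S → ∃ y ∈ pick S, y ≠ s ∧ dist s y < R :=
    fun S => (exists_maximal_sep_s14 S R).choose_spec
  let rem : ℕ → Set M := fun k => Nat.rec X (fun _ S => S \ pick S) k
  have hrem0 : rem 0 = X := rfl
  have hremS : ∀ k, rem (k + 1) = rem k \ pick (rem k) := fun k => rfl
  have hmono : ∀ j k : ℕ, j ≤ k → rem k ⊆ rem j := by
    intro j k h
    induction h with
    | refl => exact subset_rfl
    | step _ ih =>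
      rename_i m _
      exact fun z hz => ih ((hremS m ▸ hz).1)
  have hremX : ∀ k, rem k ⊆ X := fun k => hmono 0 k (Nat.zero_le k)
  -- the remainder after C steps is empty
  have hremC : rem C = ∅ := by
    by_contra hne
    obtain ⟨x, hx⟩ := Set.nonempty_iff_ne_empty.mpr hne
    have hxk : ∀ k, k < C → x ∈ rem k ∧ x ∉ pick (rem k) := by
      intro k hk
      have : x ∈ rem (k + 1) := hmono (k + 1) C hk hx
      rw [hremS k] at this
      exact ⟨Set.diff_subset this, this.2⟩
    have hg : ∀ k : Fin C, ∃ y ∈ pick (rem k), y ≠ x ∧ dist x y < R := by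
      intro k
      exact (hpick (rem k)).2.2 x (hxk k k.isLt).1 (hxk k k.isLt).2
    choose g hg1 hg2 hg3 using hg
    have hginj : Function.Injective g := by
      intro j k hjk
      by_contra hne'
      rcases lt_or_gt_of_ne (fun h : (j : ℕ) = (k : ℕ) => hne' (Fin.ext h)) with h | h
      · have : g k ∈ rem (j + 1) := hmono (j + 1) k h ((hpick (rem k)).1 (hg1 k))
        rw [hremS j] at this
        exact this.2 (hjk ▸ hg1 j)
      · have : g j ∈ rem (k + 1) := hmono (k + 1) j h ((hpick (rem j)).1 (hg1 j))
        rw [hremS k] at this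
        exact this.2 (hjk ▸ hg1 k)
    set A := X ∩ closedBall x R with hA
    have hxA : x ∈ A := ⟨hremX C hx, mem_closedBall_self hR.le⟩
    have hgA : ∀ k, g k ∈ A := by
      intro k
      refine ⟨hremX k ((hpick (rem k)).1 (hg1 k)), ?_⟩
      rw [mem_closedBall, dist_comm]
      exact (hg3 k).le
    have hxnr : x ∉ Set.range g := by
      rintro ⟨k, hk⟩
      exact hg2 k hk
    have hrfin : (Set.range g).Finite := Set.finite_range g
    have h1 : (insert x (Set.range g)).ncard = C + 1 := by
      rw [Set.ncard_insert_of_notMem hxnr hrfin]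
      have : (Set.range g).ncard = C := by
        rw [← Set.image_univ, Set.ncard_image_of_injective _ hginj, Set.ncard_univ,
          Nat.card_eq_fintype_card, Fintype.card_fin]
      rw [this]
    have h2 : (insert x (Set.range g)).ncard ≤ A.ncard := by
      apply Set.ncard_le_ncard _ (hcount x).1
      exact insert_subset hxA (by rintro _ ⟨k, rfl⟩; exact hgA k)
    have h3 := (hcount x).2
    rw [hA] at h2
    omega
  -- the decomposition
  refine ⟨fun i => pick (rem i), fun i => (hpick (rem i)).2.1, ?_⟩
  have hcover : ∀ z ∈ X, ∃ j, ∃ _ : j < C, z ∈ pick (rem j) := by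
    have key : ∀ k, ∀ z ∈ X, z ∈ rem k ∨ ∃ j, ∃ _ : j < k, z ∈ pick (rem j) := by
      intro k
      induction k with
      | zero => intro z hz; exact Or.inl hz
      | succ k ih =>
        intro z hz
        rcases ih z hz with h | ⟨j, hj, hzj⟩
        · by_cases hp : z ∈ pick (rem k)
          · exact Or.inr ⟨k, Nat.lt_succ_self k, hp⟩
          · exact Or.inl (by rw [hremS k]; exact ⟨h, hp⟩)
        · exact Or.inr ⟨j, hj.trans (Nat.lt_succ_self k), hzj⟩
    intro z hz
    rcases key C z hz with h | h
    · exact absurd h (by rw [hremC]; exact notMem_empty z)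
    · exact h
  intro m
  obtain ⟨z, hzX, hzd⟩ := hXdense m
  obtain ⟨j, hj, hzj⟩ := hcover z hzX
  exact ⟨z, Set.mem_iUnion.mpr ⟨⟨j, hj⟩, hzj⟩, hzd⟩

/-- (i) → (ii) -/
lemma i_to_ii (h : ∃ R > (0 : ℝ), MemE' {p : M × M | dist p.1 p.2 ≤ R}) :
    ∃ R > (0 : ℝ), PropBG M R := by
  classical
  obtain ⟨R, hR, hS, hE⟩ := h
  refine ⟨R, hR, ?_⟩
  intro ε hε
  obtain ⟨η, hη, N, Ei, hun, hc⟩ := hE ε hε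
  choose c hcsub using hc
  refine ⟨N, ?_⟩
  intro x
  refine ⟨Finset.image (fun i => c i x) Finset.univ, ?_, ?_⟩
  · exact Finset.card_image_le.trans (by simp)
  · intro m hm
    have hmx : (m, x) ∈ ⋃ i, Ei i := by
      rw [hun]
      exact Or.inl (by simpa using (mem_closedBall.mp hm))
    obtain ⟨i, hi⟩ := Set.mem_iUnion.mp hmx
    have hball : m ∈ closedBall (c i x) ε :=
      hcsub i x ⟨x, hi, by simp [hη.le]⟩
    exact Set.mem_iUnion₂.mpr ⟨c i x, Finset.mem_image.mpr ⟨i, Finset.mem_univ i, rfl⟩, hball⟩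

/-- (ii) → (iii) -/
lemma ii_to_iii (h : ∃ R > (0 : ℝ), PropBG M R) :
    ∃ R > (0 : ℝ), ∀ ε > (0 : ℝ), ∃ (N : ℕ) (Y : Fin N → Set M),
      (∀ i, ∀ x ∈ Y i, ∀ y ∈ Y i, x ≠ y → R ≤ dist x y) ∧
      IsEpsDense ε (⋃ i, Y i) := by
  obtain ⟨R, hR, hBG⟩ := h
  refine ⟨R, hR, ?_⟩
  intro ε hε
  obtain ⟨C, hC⟩ := hBG (ε / 3) (by linarith)
  obtain ⟨Y, hsep, hdense⟩ := exists_decomp hR hε hC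
  exact ⟨C, Y, hsep, hdense⟩

/-- (iii) → (ii) -/
lemma iii_to_ii (h : ∃ R > (0 : ℝ), ∀ ε > (0 : ℝ), ∃ (N : ℕ) (Y : Fin N → Set M),
      (∀ i, ∀ x ∈ Y i, ∀ y ∈ Y i, x ≠ y → R ≤ dist x y) ∧
      IsEpsDense ε (⋃ i, Y i)) :
    ∃ R > (0 : ℝ), PropBG M R := by
  classical
  obtain ⟨R, hR, h3⟩ := h
  refine ⟨R / 4, by linarith, ?_⟩
  intro ε hε
  set ε₁ := min ε (R / 8) with hε₁def
  have hε₁ : 0 < ε₁ := lt_min hε (by linarith)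
  obtain ⟨N, Y, hsep, hdense⟩ := h3 ε₁ hε₁
  refine ⟨N, ?_⟩
  intro x
  set c : Fin N → M := fun i =>
    if hi : ∃ y, y ∈ Y i ∧ dist y x ≤ 3 * R / 8 then hi.choose else x with hcdef
  refine ⟨Finset.image c Finset.univ, Finset.card_image_le.trans (by simp), ?_⟩
  intro m hm
  obtain ⟨y, hyU, hmy⟩ := hdense m
  obtain ⟨i, hyi⟩ := Set.mem_iUnion.mp hyU
  have hyx : dist y x ≤ 3 * R / 8 := by
    have h1 : dist y x ≤ dist y m + dist m x := dist_triangle y m x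
    have h2 : dist m x ≤ R / 4 := mem_closedBall.mp hm
    have h3' : dist y m < ε₁ := by rwa [dist_comm]
    have h4 : ε₁ ≤ R / 8 := min_le_right _ _
    linarith
  have hex : ∃ y', y' ∈ Y i ∧ dist y' x ≤ 3 * R / 8 := ⟨y, hyi, hyx⟩
  have hci : c i = hex.choose := dif_pos hex
  obtain ⟨hc1, hc2⟩ := hex.choose_spec
  have hyc : y = c i := by
    by_contra hne
    have := hsep i y hyi (c i) (hci ▸ hc1) hne
    have hd : dist y (c i) ≤ dist y x + dist x (c i) := dist_triangle y x (c i)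
    rw [dist_comm x (c i), hci] at hd
    rw [hci] at this
    linarith [this, hc2, hyx]
  refine Set.mem_iUnion₂.mpr ⟨c i, Finset.mem_image.mpr ⟨i, Finset.mem_univ i, rfl⟩, ?_⟩
  rw [mem_closedBall, ← hyc]
  exact le_trans hmy.le (min_le_left _ _)

/-- (iii) → (i) -/
lemma iii_to_i (h : ∃ R > (0 : ℝ), ∀ ε > (0 : ℝ), ∃ (N : ℕ) (Y : Fin N → Set M),
      (∀ i, ∀ x ∈ Y i, ∀ y ∈ Y i, x ≠ y → R ≤ dist x y) ∧
      IsEpsDense ε (⋃ i, Y i)) :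
    ∃ R > (0 : ℝ), MemE' {p : M × M | dist p.1 p.2 ≤ R} := by
  obtain ⟨R, hR, h3⟩ := h
  refine ⟨R / 8, by linarith, ⟨⟨R / 8, fun p hp => hp⟩, ?_⟩⟩
  intro ε hε
  set δ := min ε (R / 8) with hδdef
  have hδ : 0 < δ := lt_min hε (by linarith)
  have hδR : δ ≤ R / 8 := min_le_right _ _
  have hδε : δ ≤ ε := min_le_left _ _
  obtain ⟨N, Y, hsep, hdense⟩ := h3 δ hδ
  refine ⟨R / 8, by linarith, N,
    fun i => {p : M × M | dist p.1 p.2 ≤ R / 8 ∧ ∃ x ∈ Y i, dist p.1 x < δ}, ?_, ?_⟩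
  · ext p
    simp only [Set.mem_iUnion, Set.mem_setOf_eq, Set.mem_union]
    constructor
    · rintro ⟨i, h1, -⟩
      exact Or.inl h1
    · intro h'
      have h1 : dist p.1 p.2 ≤ R / 8 := by
        rcases h' with h' | h'
        · exact h'
        · rwa [dist_comm]
      obtain ⟨x, hxU, hpx⟩ := hdense p.1
      obtain ⟨i, hxi⟩ := Set.mem_iUnion.mp hxU
      exact ⟨i, h1, x, hxi, hpx⟩
  · intro i a
    by_cases hA : ∃ y z : M, (dist y z ≤ R / 8 ∧ ∃ x ∈ Y i, dist y x < δ) ∧ dist z a ≤ R / 8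
    · obtain ⟨y₀, z₀, ⟨hd₀, x₀, hx₀, hdx₀⟩, hz₀⟩ := hA
      refine ⟨x₀, ?_⟩
      rintro y ⟨z, ⟨hd, x, hx, hdx⟩, hza⟩
      have key : ∀ (y' z' x' : M), dist y' z' ≤ R / 8 → dist y' x' < δ → dist z' a ≤ R / 8 →
          dist x' a ≤ 3 * R / 8 := by
        intro y' z' x' h1 h2 h3
        have t1 : dist x' a ≤ dist x' y' + dist y' a := dist_triangle x' y' a
        have t2 : dist y' a ≤ dist y' z' + dist z' a := dist_triangle y' z' a
        rw [dist_comm x' y'] at t1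
        linarith
      have hxa : dist x a ≤ 3 * R / 8 := key y z x hd hdx hza
      have hx₀a : dist x₀ a ≤ 3 * R / 8 := key y₀ z₀ x₀ hd₀ hdx₀ hz₀
      have hxx₀ : x = x₀ := by
        by_contra hne
        have := hsep i x hx x₀ hx₀ hne
        have t : dist x x₀ ≤ dist x a + dist a x₀ := dist_triangle x a x₀
        rw [dist_comm a x₀] at t
        linarith
      rw [mem_closedBall, ← hxx₀]
      exact le_trans hdx.le hδε
    · refine ⟨a, ?_⟩
      rintro y ⟨z, hyz, hza⟩
      exact absurd ⟨y, z, hyz, hza⟩ hA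

end Aux

/-- For a metric space `M`, the following are equivalent:
(i) there is `R > 0` with `Δ_R ∈ ℰ′`; (ii) there is `R > 0` such that `M` satisfies
`(BG)_R`; (iii) there is `R > 0` such that for every `ε > 0` there is an `ε`-dense subset
of `M` which is a finite union of `R`-separated subsets. -/
theorem stmt_14 {M : Type*} [MetricSpace M] :
    ((∃ R > (0 : ℝ), MemE' {p : M × M | dist p.1 p.2 ≤ R}) ↔
      (∃ R > (0 : ℝ), PropBG M R)) ∧
    ((∃ R > (0 : ℝ), PropBG M R) ↔
      (∃ R > (0 : ℝ), ∀ ε > (0 : ℝ), ∃ (N : ℕ) (Y : Fin N → Set M),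
        (∀ i, ∀ x ∈ Y i, ∀ y ∈ Y i, x ≠ y → R ≤ dist x y) ∧
        IsEpsDense ε (⋃ i, Y i))) := by
  constructor
  · exact ⟨fun h => i_to_ii h, fun h => iii_to_i (ii_to_iii h)⟩
  · exact ⟨fun h => ii_to_iii h, fun h => iii_to_ii h⟩
end

section
/- Let M be a metric space, let X ⊆ M be a subset which has bounded geometry (as a metric subspace), and let E ∈ ℰ′. Then the set E∘X = {y ∈ M : ∃x ∈ X, (y,x) ∈ E}, equipped with the subspace metric, has bounded geometry; similarly X∘E = {y ∈ M : ∃x ∈ X, (x,y) ∈ E} has bounded geometry. -/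

lemma ncard_univ_prod {α β : Type*} [Fintype α] (B : Set β) :
    ((Set.univ : Set α) ×ˢ B).ncard = Fintype.card α * B.ncard := by
  calc ((Set.univ : Set α) ×ˢ B).ncard
      = Nat.card ↥((Set.univ : Set α) ×ˢ B) := (Nat.card_coe_set_eq _).symm
    _ = Nat.card (↥(Set.univ : Set α) × ↥B) := Nat.card_congr (Equiv.Set.prod _ _)
    _ = Nat.card ↥(Set.univ : Set α) * Nat.card ↥B := Nat.card_prod _ _
    _ = Fintype.card α * B.ncard := by
        rw [Nat.card_coe_set_eq, Nat.card_coe_set_eq, Set.ncard_univ, Nat.card_eq_fintype_card]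

lemma key {M : Type*} [MetricSpace M] (X : Set M)
    (hX : BoundedGeometry ↥X) (E : Set (M × M)) (hE : MemE' E) :
    BoundedGeometry ↥{y : M | ∃ x ∈ X, (y, x) ∈ E} := by
  classical
  set Y := {y : M | ∃ x ∈ X, (y, x) ∈ E} with hYdef
  by_cases hne : Nonempty ↥Y
  swap
  · intro ε hε
    refine ⟨∅, fun m => absurd ⟨m⟩ hne, fun R hR => ⟨0, fun x hx => absurd hx (by simp)⟩⟩
  obtain ⟨y₀⟩ := hne
  obtain ⟨⟨S₀, hS₀⟩, hE2⟩ := hE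
  set S := max S₀ 0 with hSdef
  have hS : ∀ p ∈ E, dist p.1 p.2 ≤ S := fun p hp => (hS₀ p hp).trans (le_max_left _ _)
  have hSnn : (0:ℝ) ≤ S := le_max_right _ _
  intro ε hε
  obtain ⟨η, hη, N, Ei, hcover, hball⟩ := hE2 (ε/3) (by positivity)
  obtain ⟨D, hDdense, hDulf⟩ := hX η hη
  set K : ℝ := S + η with hKdef
  have hK : (0:ℝ) < K := by positivity
  -- the sets E_i ∘ B̄(d, η)
  set T : Fin N → M → Set M :=
    fun i a => {y : M | ∃ z : M, (y, z) ∈ Ei i ∧ dist z a ≤ η} with hTdef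
  -- any point of T i a is within K of a
  have hTK : ∀ (i : Fin N) (a : M) (y : M), y ∈ T i a → dist y a ≤ K := by
    intro i a y ⟨z, hz, hza⟩
    have hmem : (y, z) ∈ E ∪ {p : M × M | (p.2, p.1) ∈ E} := by
      rw [← hcover]; exact Set.mem_iUnion.2 ⟨i, hz⟩
    have hdyz : dist y z ≤ S := by
      rcases hmem with h | h
      · exact hS _ h
      · rw [dist_comm]; exact hS _ h
    calc dist y a ≤ dist y z + dist z a := dist_triangle _ _ _
      _ ≤ S + η := add_le_add hdyz hza
  -- choice function
  let F : Fin N → ↥X → ↥Y := fun i d =>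
    if h : ∃ q : ↥Y, (q : M) ∈ T i (d : M) then h.choose else y₀
  have hF : ∀ (i : Fin N) (d : ↥X) (h : ∃ q : ↥Y, (q : M) ∈ T i (d : M)),
      ((F i d : ↥Y) : M) ∈ T i (d : M) := by
    intro i d h
    simp only [F, dif_pos h]
    exact h.choose_spec
  set Z : Set ↥Y :=
    {p : ↥Y | ∃ i : Fin N, ∃ d ∈ D, (∃ q : ↥Y, (q : M) ∈ T i (d : M)) ∧ p = F i d} with hZdef
  -- every point of Y lies in some T i d with d ∈ D
  have hYT : ∀ y : ↥Y, ∃ i : Fin N, ∃ d ∈ D, (y : M) ∈ T i (d : M) := by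
    intro y
    obtain ⟨x, hx, hyx⟩ := y.2
    have hmem : ((y : M), x) ∈ ⋃ i, Ei i := by
      rw [hcover]; exact Or.inl hyx
    obtain ⟨i, hi⟩ := Set.mem_iUnion.1 hmem
    obtain ⟨d, hd, hdist⟩ := hDdense ⟨x, hx⟩
    refine ⟨i, d, hd, x, hi, ?_⟩
    have : dist (⟨x, hx⟩ : ↥X) d = dist x (d : M) := Subtype.dist_eq _ _
    linarith [hdist, this.symm.le]
  refine ⟨Z, ?_, ?_⟩
  · -- eps-dense
    intro y
    obtain ⟨i, d, hd, hyT⟩ := hYT y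
    have hex : ∃ q : ↥Y, (q : M) ∈ T i (d : M) := ⟨y, hyT⟩
    refine ⟨F i d, ⟨i, d, hd, hex, rfl⟩, ?_⟩
    obtain ⟨c, hc⟩ := hball i (d : M)
    have h1 := hc hyT
    have h2 := hc (hF i d hex)
    rw [Subtype.dist_eq]
    calc dist (y : M) ((F i d : ↥Y) : M)
        ≤ dist (y : M) c + dist c ((F i d : ↥Y) : M) := dist_triangle _ _ _
      _ ≤ ε/3 + ε/3 := add_le_add (Metric.mem_closedBall.1 h1)
          (by rw [dist_comm]; exact Metric.mem_closedBall.1 h2)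
      _ < ε := by linarith
  · -- ULF
    intro R hR
    obtain ⟨ND, hND⟩ := hDulf (R + 2 * K) (by positivity)
    refine ⟨N * ND, ?_⟩
    intro q hq
    obtain ⟨j, e, he, hexq, hqF⟩ := hq
    have hqT : (q : M) ∈ T j (e : M) := hqF ▸ hF j e hexq
    have hqe : dist (q : M) (e : M) ≤ K := hTK j (e : M) (q : M) hqT
    set B : Set ↥X := D ∩ Metric.closedBall e (R + 2 * K) with hBdef
    obtain ⟨hBfin, hBcard⟩ := hND e he
    -- the key inclusion
    have hsub : Z ∩ Metric.closedBall q R ⊆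
        (fun p : Fin N × ↥X => F p.1 p.2) '' ((Set.univ : Set (Fin N)) ×ˢ B) := by
      rintro p ⟨⟨i, d, hd, hexp, hpF⟩, hpball⟩
      have hpT : (p : M) ∈ T i (d : M) := hpF ▸ hF i d hexp
      have hpd : dist (p : M) (d : M) ≤ K := hTK i (d : M) (p : M) hpT
      have hpq : dist (p : M) (q : M) ≤ R := by
        have := Metric.mem_closedBall.1 hpball
        rwa [Subtype.dist_eq] at this
      have hde : dist (d : ↥X) e ≤ R + 2 * K := by
        rw [Subtype.dist_eq]
        calc dist (d : M) (e : M)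
            ≤ dist (d : M) (p : M) + dist (p : M) (q : M) + dist (q : M) (e : M) :=
              dist_triangle4 _ _ _ _
          _ ≤ K + R + K := by
              refine add_le_add (add_le_add ?_ hpq) hqe
              rw [dist_comm]; exact hpd
          _ = R + 2 * K := by ring
      exact ⟨(i, d), ⟨Set.mem_univ _, hd, Metric.mem_closedBall.2 hde⟩, hpF.symm⟩
    have hprodfin : ((Set.univ : Set (Fin N)) ×ˢ B).Finite := Set.finite_univ.prod hBfin
    have himfin : ((fun p : Fin N × ↥X => F p.1 p.2) ''
        ((Set.univ : Set (Fin N)) ×ˢ B)).Finite := hprodfin.image _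
    refine ⟨himfin.subset hsub, ?_⟩
    calc (Z ∩ Metric.closedBall q R).ncard
        ≤ ((fun p : Fin N × ↥X => F p.1 p.2) ''
            ((Set.univ : Set (Fin N)) ×ˢ B)).ncard := Set.ncard_le_ncard hsub himfin
      _ ≤ ((Set.univ : Set (Fin N)) ×ˢ B).ncard := Set.ncard_image_le hprodfin
      _ = N * B.ncard := by rw [ncard_univ_prod, Fintype.card_fin]
      _ ≤ N * ND := Nat.mul_le_mul_left _ hBcard

/-- If `X ⊆ M` has bounded geometry (as a metric subspace) and `E ∈ ℰ′`,
then `E ∘ X = {y : ∃ x ∈ X, (y,x) ∈ E}` and `X ∘ E = {y : ∃ x ∈ X, (x,y) ∈ E}`, equipped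
with the subspace metric, have bounded geometry. -/
theorem stmt_15 {M : Type*} [MetricSpace M] (X : Set M)
    (hX : BoundedGeometry ↥X) (E : Set (M × M)) (hE : MemE' E) :
    BoundedGeometry ↥{y : M | ∃ x ∈ X, (y, x) ∈ E} ∧
    BoundedGeometry ↥{y : M | ∃ x ∈ X, (x, y) ∈ E} := by
  constructor
  · exact key X hX E hE
  · have hE' : MemE' {p : M × M | (p.2, p.1) ∈ E} := by
      obtain ⟨⟨S, hS⟩, h2⟩ := hE
      constructor
      · exact ⟨S, fun p hp => by rw [dist_comm]; exact hS _ hp⟩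
      · intro ε hε
        obtain ⟨η, hη, N, Ei, hcover, hball⟩ := h2 ε hε
        refine ⟨η, hη, N, Ei, ?_, hball⟩
        rw [hcover]
        ext p
        simp only [Set.mem_union, Set.mem_setOf_eq]
        tauto
    have : {y : M | ∃ x ∈ X, (x, y) ∈ E} =
        {y : M | ∃ x ∈ X, (y, x) ∈ {p : M × M | (p.2, p.1) ∈ E}} := rfl
    rw [this]
    exact key X hX _ hE'
end

section
/- Let M be a metric space, δ > 0, and let X', X'' ⊆ M be two δ-separated subsets. Fix 0 < ε < δ/2 and set X'_ε = {x ∈ X' : d(x, X'') ≤ ε} and X''_ε = {x ∈ X'' : d(x, X') ≤ ε}. Then there exists a unique bijection φ : X'_ε → X''_ε such that d(x, φ(x)) ≤ ε for all x ∈ X'_ε. -/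
/-!
Two points of a `δ`-separated set cannot both lie within `ε < δ / 2` of the same point, by the
triangle inequality. Hence the relation `d(x, y) ≤ ε` between `X'_ε` and `X''_ε` is unique in
both directions; it is total in both directions by definition of these sets, so it is the graph
of a bijection, and of only one map.
-/

open Function Relator

theorem Relator.BiTotal.existsUnique_bijective {α β : Type*} {r : α → β → Prop}
    (htot : BiTotal r) (huniq : BiUnique r) : ∃! φ : α → β, Bijective φ ∧ ∀ a, r a (φ a) := by
  choose φ hφ using htot.1
  refine ⟨φ, ⟨⟨fun a₁ a₂ h ↦ huniq.1 (hφ a₁) (h ▸ hφ a₂), fun b ↦ ?_⟩, hφ⟩, ?_⟩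
  · obtain ⟨a, hab⟩ := htot.2 b
    exact ⟨a, huniq.2 (hφ a) hab⟩
  · rintro ψ ⟨-, hψ⟩
    funext a
    exact huniq.2 (hψ a) (hφ a)

theorem eq_of_dist_le_of_separated {M : Type*} [PseudoMetricSpace M] {S : Set M} {δ ε : ℝ}
    (hS : ∀ x ∈ S, ∀ y ∈ S, x ≠ y → δ ≤ dist x y) (hεδ : ε < δ / 2) {x y₁ y₂ : M}
    (hy₁ : y₁ ∈ S) (hy₂ : y₂ ∈ S) (h₁ : dist x y₁ ≤ ε) (h₂ : dist x y₂ ≤ ε) : y₁ = y₂ := by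
  by_contra hne
  have := hS y₁ hy₁ y₂ hy₂ hne
  have := dist_triangle_left y₁ y₂ x
  linarith

theorem stmt_17_general {M : Type*} [MetricSpace M] (δ : ℝ)
    (X' X'' : Set M)
    (hX' : ∀ x ∈ X', ∀ y ∈ X', x ≠ y → δ ≤ dist x y)
    (hX'' : ∀ x ∈ X'', ∀ y ∈ X'', x ≠ y → δ ≤ dist x y)
    (ε : ℝ) (hεδ : ε < δ / 2) :
    ∃! φ : ↥{x ∈ X' | ∃ y ∈ X'', dist x y ≤ ε} → ↥{x ∈ X'' | ∃ y ∈ X', dist x y ≤ ε},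
      Function.Bijective φ ∧
      ∀ x : ↥{x ∈ X' | ∃ y ∈ X'', dist x y ≤ ε}, dist (x : M) (φ x : M) ≤ ε := by
  set A := {x ∈ X' | ∃ y ∈ X'', dist x y ≤ ε}
  set B := {x ∈ X'' | ∃ y ∈ X', dist x y ≤ ε}
  apply BiTotal.existsUnique_bijective (r := fun (x : A) (y : B) ↦ dist (x : M) y ≤ ε)
  · constructor
    · rintro ⟨x, hx, y, hy, hxy⟩
      exact ⟨⟨y, hy, x, hx, (dist_comm y x).trans_le hxy⟩, hxy⟩
    · rintro ⟨y, hy, x, hx, hyx⟩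
      have hxy := (dist_comm x y).trans_le hyx
      exact ⟨⟨x, hx, y, hy, hxy⟩, hxy⟩
  · constructor
    · intro x₁ x₂ y (h₁ : dist _ _ ≤ ε) (h₂ : dist _ _ ≤ ε)
      rw [dist_comm] at h₁ h₂
      exact Subtype.ext (eq_of_dist_le_of_separated hX' hεδ x₁.2.1 x₂.2.1 h₁ h₂)
    · intro x y₁ y₂ h₁ h₂
      exact Subtype.ext (eq_of_dist_le_of_separated hX'' hεδ y₁.2.1 y₂.2.1 h₁ h₂)

/-- Let `M` be a metric space, `δ > 0`, and `X', X'' ⊆ M` two `δ`-separated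
subsets. Fix `0 < ε < δ/2` and set `X'_ε = {x ∈ X' : d(x,X'') ≤ ε}`,
`X''_ε = {x ∈ X'' : d(x,X') ≤ ε}`. Then there is a unique bijection `φ : X'_ε → X''_ε`
with `d(x, φ(x)) ≤ ε` for all `x`. -/
theorem stmt_17 {M : Type*} [MetricSpace M] (δ : ℝ) (hδ : 0 < δ)
    (X' X'' : Set M)
    (hX' : ∀ x ∈ X', ∀ y ∈ X', x ≠ y → δ ≤ dist x y)
    (hX'' : ∀ x ∈ X'', ∀ y ∈ X'', x ≠ y → δ ≤ dist x y)
    (ε : ℝ) (hε : 0 < ε) (hεδ : ε < δ / 2) :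
    ∃! φ : ↥{x ∈ X' | ∃ y ∈ X'', dist x y ≤ ε} → ↥{x ∈ X'' | ∃ y ∈ X', dist x y ≤ ε},
      Function.Bijective φ ∧
      ∀ x : ↥{x ∈ X' | ∃ y ∈ X'', dist x y ≤ ε}, dist (x : M) (φ x : M) ≤ ε :=
  stmt_17_general δ X' X'' hX' hX'' ε hεδ
end

section
/- Let Γ be a locally compact group acting continuously on a locally compact Hausdorff space Y such that the action is proper (the map Γ × Y → Y × Y, (γ,y) ↦ (γ·y, y), is proper) and cocompact (there is a compact K ⊆ Y with Γ·K = Y); Γ acts diagonally on Y×Y. Let ℰ be a collection of subsets of Y×Y satisfying: (a) for all A, B ∈ ℰ, A⁻¹ ∈ ℰ and A∘B ∈ ℰ; (b) every subset of an element of ℰ belongs to ℰ; (c) every compact subset of Y×Y belongs to ℰ; (d) Γ-invariance: every E ∈ ℰ is contained in a Γ-invariant element of ℰ; (e) properness: for every E ∈ ℰ, the two coordinate projections from the closure of E in Y×Y to Y are proper maps. Then ℰ is exactly the collection of Γ-relatively compact subsets of Y×Y, i.e. the subsets contained in Γ·C for some compact C ⊆ Y×Y. -/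
/-! A member `E` of `ℰ` sits inside a `Γ`-invariant member `E'`. Translating each pair of `E'`
so that its first coordinate lands in the compact fundamental set `K` shows that `E'` is covered
by the translates of `closure E' ∩ (K × Y)`, which is compact because the first projection on
`closure E'` is proper. Conversely, the translates of a compact `C ∈ ℰ` stay in any invariant
member containing `C`, so every `Γ`-relatively compact set is a subset of a member of `ℰ`. -/

open Set Pointwise

section Invariant

variable {Γ X : Type*} [Group Γ] [MulAction Γ X] {E : Set X}

theorem iUnion_smul_subset_of_smul_mem_iff (hE : ∀ (γ : Γ) (x : X), γ • x ∈ E ↔ x ∈ E)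
    {C : Set X} (hC : C ⊆ E) : ⋃ γ : Γ, γ • C ⊆ E := by
  simp only [iUnion_subset_iff, smul_set_subset_iff]
  exact fun γ x hx => (hE γ x).2 (hC hx)

theorem subset_iUnion_smul_inter_of_smul_mem_iff (hE : ∀ (γ : Γ) (x : X), γ • x ∈ E ↔ x ∈ E)
    {S : Set X} (hS : ∀ x : X, ∃ γ : Γ, γ • x ∈ S) : E ⊆ ⋃ γ : Γ, γ • (E ∩ S) := by
  intro x hx
  obtain ⟨γ, hγ⟩ := hS x
  exact mem_iUnion.2 ⟨γ⁻¹, γ • x, ⟨(hE γ x).2 hx, hγ⟩, inv_smul_smul γ x⟩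

end Invariant

theorem IsProperMap.isCompact_inter_preimage {X Y : Type*} [TopologicalSpace X]
    [TopologicalSpace Y] {s : Set X} {f : X → Y} (hf : IsProperMap fun x : s => f x)
    {K : Set Y} (hK : IsCompact K) : IsCompact (s ∩ f ⁻¹' K) := by
  rw [← Subtype.image_preimage_coe]
  exact (hf.isCompact_preimage hK).image continuous_subtype_val

theorem stmt_19_general {Γ Y : Type*} [Group Γ] [TopologicalSpace Y] [MulAction Γ Y]
    (hcocompact : ∃ K : Set Y, IsCompact K ∧ ∀ y : Y, ∃ γ : Γ, ∃ k ∈ K, y = γ • k)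
    (ℰ : Set (Set (Y × Y)))
    (hb : ∀ A ∈ ℰ, ∀ B ⊆ A, B ∈ ℰ)
    (hc : ∀ K : Set (Y × Y), IsCompact K → K ∈ ℰ)
    (hd : ∀ E ∈ ℰ, ∃ E' ∈ ℰ, E ⊆ E' ∧
      ∀ (γ : Γ) (y y' : Y), (γ • y, γ • y') ∈ E' ↔ (y, y') ∈ E')
    (he : ∀ E ∈ ℰ,
      IsProperMap (fun p : (closure E : Set (Y × Y)) => (p : Y × Y).1) ∧
      IsProperMap (fun p : (closure E : Set (Y × Y)) => (p : Y × Y).2)) :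
    ℰ = {E : Set (Y × Y) | ∃ C : Set (Y × Y), IsCompact C ∧
      E ⊆ ⋃ γ : Γ, (fun p : Y × Y => (γ • p.1, γ • p.2)) '' C} := by
  have hdiag (γ : Γ) (C : Set (Y × Y)) :
      (fun p : Y × Y => (γ • p.1, γ • p.2)) '' C = γ • C := rfl
  ext E
  simp only [hdiag, mem_ofPred_eq]
  constructor
  · intro hE
    obtain ⟨K, hK, hKcov⟩ := hcocompact
    obtain ⟨E', hE', hEE', hinv⟩ := hd E hE
    have hfst : ∀ p : Y × Y, ∃ γ : Γ, γ • p ∈ Prod.fst ⁻¹' K := fun p => by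
      obtain ⟨γ, k, hk, hp⟩ := hKcov p.1
      exact ⟨γ⁻¹, by simpa [hp] using hk⟩
    refine ⟨closure E' ∩ Prod.fst ⁻¹' K, (he E' hE').1.isCompact_inter_preimage hK, ?_⟩
    calc E ⊆ ⋃ γ : Γ, γ • (E' ∩ Prod.fst ⁻¹' K) :=
          hEE'.trans (subset_iUnion_smul_inter_of_smul_mem_iff (fun γ p => hinv γ p.1 p.2) hfst)
      _ ⊆ ⋃ γ : Γ, γ • (closure E' ∩ Prod.fst ⁻¹' K) := by gcongr; exact subset_closure
  · rintro ⟨C, hC, hEC⟩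
    obtain ⟨E', hE', hCE', hinv⟩ := hd C (hc C hC)
    exact hb E' hE' E
      (hEC.trans (iUnion_smul_subset_of_smul_mem_iff (fun γ p => hinv γ p.1 p.2) hCE'))

/-- Let `Γ` be a locally compact group acting continuously, properly and
cocompactly on a locally compact Hausdorff space `Y`. Let `ℰ` be a collection of subsets of
`Y × Y` closed under inverses and composition, under taking subsets, containing all compact
subsets, `Γ`-invariant (every member is contained in a `Γ`-invariant member), and proper
(the coordinate projections from the closure of each member are proper maps). Then `ℰ` is
exactly the collection of `Γ`-relatively compact subsets of `Y × Y`. -/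
theorem stmt_19 {Γ Y : Type*} [Group Γ] [TopologicalSpace Γ] [IsTopologicalGroup Γ]
    [LocallyCompactSpace Γ] [TopologicalSpace Y] [T2Space Y] [LocallyCompactSpace Y]
    [MulAction Γ Y] [ContinuousSMul Γ Y]
    (hproper : IsProperMap (fun p : Γ × Y => (p.1 • p.2, p.2)))
    (hcocompact : ∃ K : Set Y, IsCompact K ∧ ∀ y : Y, ∃ γ : Γ, ∃ k ∈ K, y = γ • k)
    (ℰ : Set (Set (Y × Y)))
    (ha : ∀ A ∈ ℰ, ∀ B ∈ ℰ, {p : Y × Y | (p.2, p.1) ∈ A} ∈ ℰ ∧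
      {p : Y × Y | ∃ y : Y, (p.1, y) ∈ A ∧ (y, p.2) ∈ B} ∈ ℰ)
    (hb : ∀ A ∈ ℰ, ∀ B ⊆ A, B ∈ ℰ)
    (hc : ∀ K : Set (Y × Y), IsCompact K → K ∈ ℰ)
    (hd : ∀ E ∈ ℰ, ∃ E' ∈ ℰ, E ⊆ E' ∧
      ∀ (γ : Γ) (y y' : Y), (γ • y, γ • y') ∈ E' ↔ (y, y') ∈ E')
    (he : ∀ E ∈ ℰ,
      IsProperMap (fun p : (closure E : Set (Y × Y)) => (p : Y × Y).1) ∧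
      IsProperMap (fun p : (closure E : Set (Y × Y)) => (p : Y × Y).2)) :
    ℰ = {E : Set (Y × Y) | ∃ C : Set (Y × Y), IsCompact C ∧
      E ⊆ ⋃ γ : Γ, (fun p : Y × Y => (γ • p.1, γ • p.2)) '' C} :=
  stmt_19_general hcocompact ℰ hb hc hd he
end
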